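/- arXiv:1806.10878 — 6 statements merged into one kernel-verified Lean document; each statement's English description precedes it below -/
import Mathlib

section
/- (Hanner's inequality) For every p with 1 < p < 2 and all vectors x, y ∈ ℝⁿ, one has ‖x + y‖_p^p + ‖x − y‖_p^p ≥ (‖x‖_p + ‖y‖_p)^p + | ‖x‖_p − ‖y‖_p |^p. -/
/-!
For `0 < r ≤ 1` put `α(r) = (1 + r)^(p-1) + (1 - r)^(p-1)` and
`β(r) = ((1 + r)^(p-1) - (1 - r)^(p-1)) / r^(p-1)`. For `1 ≤ p ≤ 2` the scalar inequality
`α(r) |a|^p + β(r) |b|^p ≤ |a + b|^p + |a - b|^p` holds for every `r`: after scaling it says that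
`t ↦ (1 + t)^p + (1 - t)^p - β(r) t^p` is minimal on `[0, 1]` at `t = r`, which follows from the
monotonicity of `β`, and the value there is `α(r)`. Summing over coordinates and taking
`r = ‖y‖_p / ‖x‖_p`, the left side becomes `(‖x‖_p + ‖y‖_p)^p + (‖x‖_p - ‖y‖_p)^p`.
-/

open Finset

noncomputable def lpNorm {n : ℕ} (p : ℝ) (x : Fin n → ℝ) : ℝ :=
  (∑ i, |x i| ^ p) ^ (1 / p)

open Real

lemma antitoneOn_rpow_add_one_sub_rpow_sub_one {s : ℝ} (hs0 : 0 ≤ s) (hs1 : s ≤ 1) :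
    AntitoneOn (fun u : ℝ => (u + 1) ^ s - (u - 1) ^ s) (Set.Ici 1) := by
  have hderiv : ∀ u : ℝ, 1 < u → HasDerivAt (fun u : ℝ => (u + 1) ^ s - (u - 1) ^ s)
      (1 * s * (u + 1) ^ (s - 1) - 1 * s * (u - 1) ^ (s - 1)) u := fun u hu =>
    (((hasDerivAt_id u).add_const 1).rpow_const (Or.inl (by simp only [id]; linarith))).sub
      (((hasDerivAt_id u).sub_const 1).rpow_const (Or.inl (by simp only [id]; linarith)))
  refine antitoneOn_of_deriv_nonpos (convex_Ici 1) ?_ ?_ ?_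
  · exact ((continuousOn_id.add continuousOn_const).rpow_const fun _ _ => Or.inr hs0).sub
      ((continuousOn_id.sub continuousOn_const).rpow_const fun _ _ => Or.inr hs0)
  · rw [interior_Ici]
    exact fun u hu => (hderiv u hu).differentiableAt.differentiableWithinAt
  · rw [interior_Ici]
    intro u (hu : 1 < u)
    rw [(hderiv u hu).deriv]
    have : (u + 1) ^ (s - 1) ≤ (u - 1) ^ (s - 1) :=
      rpow_le_rpow_of_nonpos (by linarith) (by linarith) (by linarith)
    nlinarith

noncomputable def hannerAlpha (p r : ℝ) : ℝ := (1 + r) ^ (p - 1) + (1 - r) ^ (p - 1)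

/-- Equal to `((1 + r)^(p-1) - (1 - r)^(p-1)) / r^(p-1)` for `0 < r ≤ 1`; written in `r⁻¹` so that
its monotonicity in `r` is that of `u ↦ (u + 1)^(p-1) - (u - 1)^(p-1)` on `[1, ∞)`. -/
noncomputable def hannerBeta (p r : ℝ) : ℝ := (r⁻¹ + 1) ^ (p - 1) - (r⁻¹ - 1) ^ (p - 1)

section HannerWeights

variable {p r : ℝ}

lemma hannerBeta_mul_rpow (hr0 : 0 < r) (hr1 : r ≤ 1) :
    hannerBeta p r * r ^ (p - 1) = (1 + r) ^ (p - 1) - (1 - r) ^ (p - 1) := by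
  have h1 : 0 ≤ r⁻¹ + 1 := by positivity
  have h2 : 0 ≤ r⁻¹ - 1 := sub_nonneg.2 (one_le_inv₀ hr0 |>.2 hr1)
  rw [hannerBeta, sub_mul, ← mul_rpow h1 hr0.le, ← mul_rpow h2 hr0.le]
  congr 2 <;> field_simp

lemma monotoneOn_hannerBeta (hp1 : 1 ≤ p) (hp2 : p ≤ 2) :
    MonotoneOn (hannerBeta p) (Set.Ioc 0 1) :=
  (antitoneOn_rpow_add_one_sub_rpow_sub_one (by linarith) (by linarith)).comp
    (inv_antitoneOn_Ioi.mono Set.Ioc_subset_Ioi_self)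
    fun _ hr => Set.mem_Ici.2 (one_le_inv₀ hr.1 |>.2 hr.2)

lemma hannerBeta_le_hannerAlpha (hp1 : 1 ≤ p) (hp2 : p ≤ 2) (hr0 : 0 < r) (hr1 : r ≤ 1) :
    hannerBeta p r ≤ hannerAlpha p r := by
  have hs0 : 0 ≤ p - 1 := by linarith
  have hs1 : p - 1 ≤ 1 := by linarith
  have hrs : 0 < r ^ (p - 1) := rpow_pos_of_pos hr0 _
  rw [← mul_le_mul_iff_of_pos_right hrs, hannerBeta_mul_rpow hr0 hr1, hannerAlpha]
  have hA : (1 + r) ^ (p - 1) ≤ 1 + r ^ (p - 1) := by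
    simpa using rpow_add_le_add_rpow zero_le_one hr0.le hs0 hs1
  have hB : 1 ≤ (1 - r) ^ (p - 1) + r ^ (p - 1) := by
    simpa using rpow_add_le_add_rpow (sub_nonneg.2 hr1) hr0.le hs0 hs1
  have hC : r ^ (p - 1) ≤ 1 := rpow_le_one hr0.le hr1 hs0
  have hD : 0 ≤ (1 - r) ^ (p - 1) := rpow_nonneg (sub_nonneg.2 hr1) _
  nlinarith [mul_le_mul_of_nonneg_right hA (sub_nonneg.2 hC),
    mul_le_mul_of_nonneg_right hB (by positivity : (0 : ℝ) ≤ 1 + r ^ (p - 1))]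

lemma hannerAlpha_add_hannerBeta_mul_rpow (hp : p ≠ 0) (hr0 : 0 < r) (hr1 : r ≤ 1) :
    hannerAlpha p r + hannerBeta p r * r ^ p = (1 + r) ^ p + (1 - r) ^ p := by
  have split : ∀ {x : ℝ}, 0 ≤ x → x ^ p = x ^ (p - 1) * x := fun hx => by
    rw [← rpow_add_one' hx (by simpa using hp), sub_add_cancel]
  rw [split hr0.le, split (by linarith : (0 : ℝ) ≤ 1 + r), split (sub_nonneg.2 hr1), hannerAlpha,
    ← mul_assoc, hannerBeta_mul_rpow hr0 hr1]
  ring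

lemma hasDerivAt_add_rpow_add_sub_rpow_sub_mul_rpow (hp : 1 ≤ p) (c u : ℝ) :
    HasDerivAt (fun t : ℝ => (1 + t) ^ p + (1 - t) ^ p - c * t ^ p)
      (p * ((1 + u) ^ (p - 1) - (1 - u) ^ (p - 1) - c * u ^ (p - 1))) u := by
  have h1 := ((hasDerivAt_id u).const_add 1).rpow_const (p := p) (Or.inr hp)
  have h2 := ((hasDerivAt_id u).const_sub 1).rpow_const (p := p) (Or.inr hp)
  have h3 := (hasDerivAt_id u).rpow_const (p := p) (Or.inr hp)
  refine ((h1.add h2).sub (h3.const_mul c)).congr_deriv ?_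
  simp only [id]
  ring

/-- `t ↦ (1 + t)^p + (1 - t)^p - β(r) t^p` decreases on `[0, r]` and increases on `[r, 1]`, its
derivative being `p t^(p-1) (β(t) - β(r))`. -/
lemma hannerAlpha_add_hannerBeta_mul_rpow_le (hp1 : 1 ≤ p) (hp2 : p ≤ 2) (hr0 : 0 < r)
    (hr1 : r ≤ 1) {t : ℝ} (ht0 : 0 ≤ t) (ht1 : t ≤ 1) :
    hannerAlpha p r + hannerBeta p r * t ^ p ≤ (1 + t) ^ p + (1 - t) ^ p := by
  set g : ℝ → ℝ := fun t => (1 + t) ^ p + (1 - t) ^ p - hannerBeta p r * t ^ p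
  have hg := hasDerivAt_add_rpow_add_sub_rpow_sub_mul_rpow hp1 (hannerBeta p r)
  have hderiv : ∀ u ∈ Set.Ioc (0 : ℝ) 1,
      deriv g u = p * u ^ (p - 1) * (hannerBeta p u - hannerBeta p r) := fun u hu => by
    rw [(hg u).deriv, ← hannerBeta_mul_rpow hu.1 hu.2]
    ring
  have hfactor : ∀ u, 0 ≤ u → 0 ≤ p * u ^ (p - 1) := fun u hu =>
    mul_nonneg (by linarith) (rpow_nonneg hu _)
  have hgr : g r ≤ g t := by
    rcases le_total t r with htr | hrt
    · refine antitoneOn_of_deriv_nonpos (convex_Icc 0 r)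
        (fun u _ => (hg u).continuousAt.continuousWithinAt)
        (fun u _ => (hg u).differentiableAt.differentiableWithinAt) (fun u hu => ?_)
        ⟨ht0, htr⟩ ⟨hr0.le, le_rfl⟩ htr
      rw [interior_Icc] at hu
      rw [hderiv u ⟨hu.1, hu.2.le.trans hr1⟩]
      have := monotoneOn_hannerBeta hp1 hp2 ⟨hu.1, hu.2.le.trans hr1⟩ ⟨hr0, hr1⟩ hu.2.le
      exact mul_nonpos_of_nonneg_of_nonpos (hfactor u hu.1.le) (sub_nonpos.2 this)
    · refine monotoneOn_of_deriv_nonneg (convex_Icc r 1)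
        (fun u _ => (hg u).continuousAt.continuousWithinAt)
        (fun u _ => (hg u).differentiableAt.differentiableWithinAt) (fun u hu => ?_)
        ⟨le_rfl, hr1⟩ ⟨hrt, ht1⟩ hrt
      rw [interior_Icc] at hu
      rw [hderiv u ⟨hr0.trans hu.1, hu.2.le⟩]
      have := monotoneOn_hannerBeta hp1 hp2 ⟨hr0, hr1⟩ ⟨hr0.trans hu.1, hu.2.le⟩ hu.1.le
      exact mul_nonneg (hfactor u (hr0.trans hu.1).le) (sub_nonneg.2 this)
  have hid := hannerAlpha_add_hannerBeta_mul_rpow (p := p) (by linarith) hr0 hr1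
  simp only [g] at hgr
  linarith

lemma add_rpow_add_sub_rpow_eq_mul {a b : ℝ} (ha : 0 < a) (hb : 0 ≤ b) (hba : b ≤ a) :
    (a + b) ^ p + (a - b) ^ p = a ^ p * ((1 + b / a) ^ p + (1 - b / a) ^ p) := by
  have hq : 0 ≤ b / a := div_nonneg hb ha.le
  have hq1 : b / a ≤ 1 := (div_le_one ha).2 hba
  rw [mul_add, ← mul_rpow ha.le (by linarith), ← mul_rpow ha.le (by linarith)]
  congr 2 <;> field_simp

lemma rpow_eq_rpow_mul_div_rpow {a b : ℝ} (ha : 0 < a) (hb : 0 ≤ b) :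
    b ^ p = a ^ p * (b / a) ^ p := by
  rw [div_rpow hb ha.le, mul_div_cancel₀ _ (rpow_pos_of_pos ha p).ne']

lemma hannerAlpha_mul_rpow_add_hannerBeta_mul_rpow_le_of_le (hp1 : 1 ≤ p) (hp2 : p ≤ 2)
    (hr0 : 0 < r) (hr1 : r ≤ 1) {a b : ℝ} (hb : 0 ≤ b) (hba : b ≤ a) :
    hannerAlpha p r * a ^ p + hannerBeta p r * b ^ p ≤ (a + b) ^ p + (a - b) ^ p := by
  rcases (hb.trans hba).eq_or_lt with rfl | ha
  · obtain rfl : b = 0 := le_antisymm hba hb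
    simp [zero_rpow (by linarith : p ≠ 0)]
  rw [add_rpow_add_sub_rpow_eq_mul ha hb hba, rpow_eq_rpow_mul_div_rpow ha hb]
  have key := hannerAlpha_add_hannerBeta_mul_rpow_le hp1 hp2 hr0 hr1 (div_nonneg hb ha.le)
    ((div_le_one ha).2 hba)
  nlinarith [rpow_pos_of_pos ha p]

lemma hannerAlpha_mul_rpow_add_hannerBeta_mul_rpow_div (hp : p ≠ 0) {a b : ℝ} (hb : 0 < b)
    (hba : b ≤ a) :
    hannerAlpha p (b / a) * a ^ p + hannerBeta p (b / a) * b ^ p = (a + b) ^ p + (a - b) ^ p := by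
  have ha := hb.trans_le hba
  rw [add_rpow_add_sub_rpow_eq_mul ha hb.le hba, rpow_eq_rpow_mul_div_rpow ha hb.le,
    ← hannerAlpha_add_hannerBeta_mul_rpow hp (div_pos hb ha) ((div_le_one ha).2 hba)]
  ring

lemma abs_add_rpow_add_abs_sub_rpow (a b : ℝ) :
    |a + b| ^ p + |a - b| ^ p = (|a| + |b|) ^ p + |(|a| - |b|)| ^ p := by
  have : (|a + b| = |a| + |b| ∧ |a - b| = |(|a| - |b|)|) ∨
      (|a - b| = |a| + |b| ∧ |a + b| = |(|a| - |b|)|) := by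
    rcases abs_cases a with ⟨ha, -⟩ | ⟨ha, -⟩ <;> rcases abs_cases b with ⟨hb, -⟩ | ⟨hb, -⟩ <;>
      rcases abs_cases (a + b) with ⟨h₁, -⟩ | ⟨h₁, -⟩ <;>
      rcases abs_cases (a - b) with ⟨h₂, -⟩ | ⟨h₂, -⟩ <;>
      rw [ha, hb, h₁, h₂] <;> grind
  rcases this with ⟨h₁, h₂⟩ | ⟨h₁, h₂⟩ <;> rw [h₁, h₂]
  exact add_comm _ _

lemma hannerAlpha_mul_abs_rpow_add_hannerBeta_mul_abs_rpow_le (hp1 : 1 ≤ p) (hp2 : p ≤ 2)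
    (hr0 : 0 < r) (hr1 : r ≤ 1) (a b : ℝ) :
    hannerAlpha p r * |a| ^ p + hannerBeta p r * |b| ^ p ≤ |a + b| ^ p + |a - b| ^ p := by
  rw [abs_add_rpow_add_abs_sub_rpow]
  rcases le_total |b| |a| with h | h
  · rw [abs_of_nonneg (sub_nonneg.2 h)]
    exact hannerAlpha_mul_rpow_add_hannerBeta_mul_rpow_le_of_le hp1 hp2 hr0 hr1 (abs_nonneg b) h
  · have hab : |a| ^ p ≤ |b| ^ p := rpow_le_rpow (abs_nonneg a) h (by linarith)
    have hβα := hannerBeta_le_hannerAlpha hp1 hp2 hr0 hr1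
    calc hannerAlpha p r * |a| ^ p + hannerBeta p r * |b| ^ p
        ≤ hannerAlpha p r * |b| ^ p + hannerBeta p r * |a| ^ p := by
          nlinarith [mul_nonneg (sub_nonneg.2 hβα) (sub_nonneg.2 hab)]
      _ ≤ (|b| + |a|) ^ p + (|b| - |a|) ^ p :=
          hannerAlpha_mul_rpow_add_hannerBeta_mul_rpow_le_of_le hp1 hp2 hr0 hr1 (abs_nonneg a) h
      _ = (|a| + |b|) ^ p + |(|a| - |b|)| ^ p := by
          rw [add_comm |b|, abs_sub_comm, abs_of_nonneg (sub_nonneg.2 h)]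

end HannerWeights

section LpNorm

variable {n : ℕ} {p : ℝ}

lemma lpNorm_nonneg (x : Fin n → ℝ) : 0 ≤ lpNorm p x :=
  rpow_nonneg (sum_nonneg fun _ _ => rpow_nonneg (abs_nonneg _) _) _

lemma lpNorm_rpow (hp : p ≠ 0) (x : Fin n → ℝ) : lpNorm p x ^ p = ∑ i, |x i| ^ p := by
  rw [lpNorm, one_div, rpow_inv_rpow (sum_nonneg fun _ _ => rpow_nonneg (abs_nonneg _) _) hp]

lemma lpNorm_eq_zero (hp : p ≠ 0) {x : Fin n → ℝ} : lpNorm p x = 0 ↔ x = 0 := by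
  have hterm : ∀ i ∈ univ, 0 ≤ |x i| ^ p := fun _ _ => rpow_nonneg (abs_nonneg _) _
  simp [lpNorm, rpow_eq_zero_iff_of_nonneg (sum_nonneg hterm), sum_eq_zero_iff_of_nonneg hterm,
    hp, funext_iff]

lemma lpNorm_sub_comm (x y : Fin n → ℝ) : lpNorm p (x - y) = lpNorm p (y - x) := by
  simp only [lpNorm, Pi.sub_apply, abs_sub_comm]

lemma hannerAlpha_mul_lpNorm_rpow_add_hannerBeta_mul_lpNorm_rpow_le (hp1 : 1 ≤ p) (hp2 : p ≤ 2)
    {r : ℝ} (hr0 : 0 < r) (hr1 : r ≤ 1) (x y : Fin n → ℝ) :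
    hannerAlpha p r * lpNorm p x ^ p + hannerBeta p r * lpNorm p y ^ p ≤
      lpNorm p (x + y) ^ p + lpNorm p (x - y) ^ p := by
  have hp : p ≠ 0 := by linarith
  simp only [lpNorm_rpow hp, mul_sum, ← sum_add_distrib, Pi.add_apply, Pi.sub_apply]
  exact sum_le_sum fun i _ =>
    hannerAlpha_mul_abs_rpow_add_hannerBeta_mul_abs_rpow_le hp1 hp2 hr0 hr1 (x i) (y i)

end LpNorm

/-- Hanner's inequality: for `1 < p < 2` and `x, y ∈ ℝⁿ`,
`‖x + y‖_p^p + ‖x − y‖_p^p ≥ (‖x‖_p + ‖y‖_p)^p + |‖x‖_p − ‖y‖_p|^p`. -/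
theorem hanner_inequality {n : ℕ} (p : ℝ) (hp1 : 1 < p) (hp2 : p < 2)
    (x y : Fin n → ℝ) :
    lpNorm p (x + y) ^ p + lpNorm p (x - y) ^ p ≥
      (lpNorm p x + lpNorm p y) ^ p + |lpNorm p x - lpNorm p y| ^ p := by
  wlog hle : lpNorm p y ≤ lpNorm p x generalizing x y
  · have := this y x (le_of_not_ge hle)
    rwa [add_comm y, lpNorm_sub_comm, add_comm (lpNorm p y), abs_sub_comm] at this
  have hp : p ≠ 0 := by linarith
  rw [abs_of_nonneg (sub_nonneg.2 hle), ge_iff_le]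
  rcases (lpNorm_nonneg y).eq_or_lt with hy | hy
  · obtain rfl : y = 0 := (lpNorm_eq_zero hp).1 hy.symm
    simp [← hy]
  calc (lpNorm p x + lpNorm p y) ^ p + (lpNorm p x - lpNorm p y) ^ p
      = hannerAlpha p (lpNorm p y / lpNorm p x) * lpNorm p x ^ p +
          hannerBeta p (lpNorm p y / lpNorm p x) * lpNorm p y ^ p :=
        (hannerAlpha_mul_rpow_add_hannerBeta_mul_rpow_div hp hy hle).symm
    _ ≤ lpNorm p (x + y) ^ p + lpNorm p (x - y) ^ p :=
        hannerAlpha_mul_lpNorm_rpow_add_hannerBeta_mul_lpNorm_rpow_le hp1.le hp2.le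
          (div_pos hy (hy.trans_le hle)) ((div_le_one (hy.trans_le hle)).2 hle) x y
end

section
/- Let 1 < p < 2 and let B ∈ GL_3(ℝ) satisfy ‖Bu‖_p = 1 for all u ∈ 𝒰³. Then ‖Bu‖_p ≥ 1 for all u ∈ ℤ³ \ {0}. -/
/-!
Write `s₀ = -(1,1,1)` and `s₁, s₂, s₃` for the unit vectors, so that `s₀ + s₁ + s₂ + s₃ = 0`.
Every nonzero `u ∈ ℤ³` is `∑ αᵢ sᵢ` with `α ∈ ℕ⁴` nonzero and vanishing somewhere, and the
partial sums `∑_{i ∈ T} sᵢ` over nonempty proper `T ⊆ {0,1,2,3}` are exactly the vectors of `𝒰³`.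
So it suffices to show, for any vectors `sᵢ` of a normed space whose proper partial sums have
norm `1`, that `‖∑ αᵢ sᵢ‖ ≥ 1`. Peeling off the level sets `{i | αᵢ > k}` shows
`‖∑ βᵢ sᵢ‖ ≤ max β` whenever `β` vanishes somewhere. Completing `α` on its support `T` to the
constant `a + 1`, where `a = max α`, by such a `β ≤ a` gives
`a + 1 = ‖∑ αᵢ sᵢ + ∑ βᵢ sᵢ‖ ≤ ‖∑ αᵢ sᵢ‖ + a`.
-/

open Finset

/-- The set 𝒰³ = {±(1,0,0), ±(0,1,0), ±(0,0,1), ±(1,1,0), ±(0,1,1), ±(1,0,1), ±(1,1,1)} ⊆ ℤ³. -/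
def U3 : Set (Fin 3 → ℤ) :=
  {![1,0,0], ![0,1,0], ![0,0,1], ![1,1,0], ![0,1,1], ![1,0,1], ![1,1,1],
   -![1,0,0], -![0,1,0], -![0,0,1], -![1,1,0], -![0,1,1], -![1,0,1], -![1,1,1]}

section Superbase

variable {ι E : Type*} [Fintype ι] [NormedAddCommGroup E] {s : ι → E}

theorem sum_nsmul_eq_sum_range_sum_filter_lt {K : ℕ} (β : ι → ℕ) (hβK : ∀ i, β i ≤ K) :
    ∑ i, β i • s i = ∑ k ∈ range K, ∑ i with k < β i, s i := by
  have card_layers (i : ι) : #{k ∈ range K | k < β i} = β i := by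
    have layers : {k ∈ range K | k < β i} = range (β i) := by
      ext k
      simp only [mem_filter, mem_range]
      have := hβK i
      omega
    rw [layers, card_range]
  simp_rw [sum_filter, sum_comm (s := range K), ← sum_filter, sum_const, card_layers]

theorem norm_sum_nsmul_le (hs : ∀ T : Finset ι, T ≠ univ → ‖∑ i ∈ T, s i‖ ≤ 1)
    {K : ℕ} (β : ι → ℕ) (hβK : ∀ i, β i ≤ K) (hβ : ∃ i, β i = 0) :
    ‖∑ i, β i • s i‖ ≤ K := by
  obtain ⟨i₀, hi₀⟩ := hβ
  rw [sum_nsmul_eq_sum_range_sum_filter_lt β hβK]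
  calc ‖∑ k ∈ range K, ∑ i with k < β i, s i‖
      ≤ ∑ k ∈ range K, ‖∑ i with k < β i, s i‖ := norm_sum_le _ _
    _ ≤ ∑ k ∈ range K, 1 := by
      gcongr with k
      exact hs _ fun h => by simpa [hi₀] using h.ge (mem_univ i₀)
    _ = K := by simp

theorem one_le_norm_sum_nsmul [NormedSpace ℝ E]
    (hs : ∀ T : Finset ι, T.Nonempty → T ≠ univ → ‖∑ i ∈ T, s i‖ = 1)
    (α : ι → ℕ) (hα0 : ∃ i, α i = 0) (hα : α ≠ 0) : 1 ≤ ‖∑ i, α i • s i‖ := by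
  obtain ⟨i₀, hi₀⟩ := hα0
  set T : Finset ι := {i | α i ≠ 0}
  have hT : T.Nonempty := by
    obtain ⟨i, hi⟩ := Function.ne_iff.mp hα
    exact ⟨i, by simpa [T] using hi⟩
  have hTu : T ≠ univ := fun h => by simpa [T, hi₀] using h.ge (mem_univ i₀)
  set a := univ.sup α
  have hαa (i : ι) : α i ≤ a := le_sup (mem_univ i)
  set β : ι → ℕ := fun i => if α i = 0 then 0 else a + 1 - α i
  have hsum : ∑ i, α i • s i + ∑ i, β i • s i = (a + 1) • ∑ i ∈ T, s i := by
    rw [← sum_add_distrib, smul_sum, sum_filter]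
    refine sum_congr rfl fun i _ => ?_
    by_cases h : α i = 0
    · simp [β, h]
    · simp only [β, if_pos h, if_neg h, ← add_smul, Nat.add_sub_cancel' ((hαa i).trans a.le_succ)]
  have hβ : ‖∑ i, β i • s i‖ ≤ a := by
    refine norm_sum_nsmul_le (fun T' hT' => ?_) β (fun i => ?_) ⟨i₀, by simp [β, hi₀]⟩
    · rcases T'.eq_empty_or_nonempty with rfl | hne
      · simp
      · exact (hs T' hne hT').le
    · simp only [β]
      split_ifs <;> omega
  have := norm_add_le (∑ i, α i • s i) (∑ i, β i • s i)
  rw [hsum, RCLike.norm_nsmul ℝ, hs T hT hTu, nsmul_eq_mul, mul_one] at this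
  push_cast at this
  linarith

end Superbase

def superbase (n : ℕ) : Fin (n + 1) → Fin n → ℤ := Fin.cons (-1) fun j => Pi.single j 1

theorem exists_eq_sum_nsmul_superbase {n : ℕ} (u : Fin n → ℤ) (hu : u ≠ 0) :
    ∃ α : Fin (n + 1) → ℕ, (∃ i, α i = 0) ∧ α ≠ 0 ∧ u = ∑ i, α i • superbase n i := by
  -- `α = (c, u + c)`, where `c` is the largest negative part of a coordinate of `u`
  obtain ⟨c, hc_eq⟩ : ∃ c, univ.sup (fun j => (-u j).toNat) = c := ⟨_, rfl⟩
  have hc (j : Fin n) : (-u j).toNat ≤ c :=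
    hc_eq ▸ le_sup (f := fun j => (-u j).toNat) (mem_univ j)
  refine ⟨Fin.cons c fun j => (u j + c).toNat, ?_, ?_, ?_⟩
  · by_contra! h
    have hc0 : 0 < c := Nat.pos_of_ne_zero (h 0)
    have : univ.sup (fun j => (-u j).toNat) < c := (Finset.sup_lt_iff hc0).mpr fun j _ => by
      have := h j.succ
      simp only [Fin.cons_succ] at this
      omega
    omega
  · intro h
    have h0 : c = 0 := congrFun h 0
    refine hu (funext fun j => ?_)
    have huj := congrFun h j.succ
    simp only [Fin.cons_succ, Pi.zero_apply] at huj ⊢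
    have := hc j
    omega
  · funext j
    have := hc j
    simp only [superbase, nsmul_eq_mul, Finset.sum_apply, Pi.mul_apply, Pi.natCast_apply,
      Fin.sum_univ_succ, Fin.cons_zero, Pi.neg_apply, Pi.one_apply, mul_neg, mul_one, Fin.cons_succ,
      Int.ofNat_toNat, Pi.single_apply, mul_ite, mul_zero, sum_ite_eq, mem_univ, if_true]
    omega

theorem sum_superbase_mem_U3 :
    ∀ T : Finset (Fin 4), T.Nonempty → T ≠ univ → ∑ i ∈ T, superbase 3 i ∈ U3 := by
  simp only [U3, Set.mem_insert_iff, Set.mem_singleton_iff]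
  decide

theorem lpNorm_eq_norm_toLp {n : ℕ} {p : ℝ} (hp : 0 < p) (x : Fin n → ℝ) :
    lpNorm p x = ‖WithLp.toLp (ENNReal.ofReal p) x‖ := by
  rw [PiLp.norm_eq_sum (by rwa [ENNReal.toReal_ofReal hp.le])]
  simp [lpNorm, ENNReal.toReal_ofReal hp.le, Real.norm_eq_abs]

theorem norm_ge_one_of_nonzero_general (p : ℝ) (hp1 : 1 < p)
    (B : Matrix (Fin 3) (Fin 3) ℝ)
    (h : ∀ u ∈ U3, lpNorm p (B.mulVec (fun i => (u i : ℝ))) = 1) :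
    ∀ u : Fin 3 → ℤ, u ≠ 0 →
      1 ≤ lpNorm p (B.mulVec (fun i => (u i : ℝ))) := by
  intro u hu
  have : Fact (1 ≤ ENNReal.ofReal p) := ⟨ENNReal.one_le_ofReal.mpr hp1.le⟩
  let L : (Fin 3 → ℤ) →+ PiLp (ENNReal.ofReal p) (fun _ : Fin 3 => ℝ) :=
    (WithLp.linearEquiv _ ℝ _).symm.toLinearMap.toAddMonoidHom.comp <|
      (Matrix.mulVecLin B).toAddMonoidHom.comp <| (Int.castAddHom ℝ).compLeft _
  have hL (v : Fin 3 → ℤ) : lpNorm p (B.mulVec fun i => (v i : ℝ)) = ‖L v‖ :=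
    lpNorm_eq_norm_toLp (by linarith) _
  obtain ⟨α, hα0, hα, rfl⟩ := exists_eq_sum_nsmul_superbase u hu
  rw [hL, map_sum]
  simp only [map_nsmul]
  refine one_le_norm_sum_nsmul (fun T hT hTu => ?_) α hα0 hα
  rw [← map_sum, ← hL]
  exact h _ (sum_superbase_mem_U3 T hT hTu)

/-- If `1 < p < 2` and `B ∈ GL₃(ℝ)` satisfies `‖Bu‖_p = 1` for all `u ∈ 𝒰³`, then
`‖Bu‖_p ≥ 1` for all `u ∈ ℤ³ \ {0}`. -/
theorem norm_ge_one_of_nonzero (p : ℝ) (hp1 : 1 < p) (hp2 : p < 2)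
    (B : Matrix (Fin 3) (Fin 3) ℝ) (hB : IsUnit B)
    (h : ∀ u ∈ U3, lpNorm p (B.mulVec (fun i => (u i : ℝ))) = 1) :
    ∀ u : Fin 3 → ℤ, u ≠ 0 →
      1 ≤ lpNorm p (B.mulVec (fun i => (u i : ℝ))) :=
  norm_ge_one_of_nonzero_general p hp1 B h
end

section
/- (Effective implicit function theorem of Cohn–Kumar–Minton, existence part) Let V and W be finite-dimensional normed real vector spaces, let x₀ ∈ V and ε > 0, and let f : B(x₀, ε) → W be a C¹ function on the open ball B(x₀, ε) ⊆ V. Suppose T : W → V is a linear operator such that ‖Df(x) ∘ T − id_W‖ < 1 − ‖T‖ · ‖f(x₀)‖ / ε for all x ∈ B(x₀, ε), where ‖·‖ denotes the operator norm, Df(x) is the (Fréchet) derivative of f at x, and id_W is the identity operator on W. Then there exists x* ∈ B(x₀, ε) with f(x*) = 0. -/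
/-!
Composed with `w ↦ x₀ + T w`, `f` becomes a self-map `g` of `W` with `‖Dg - id‖ < k`, where
`k = 1 - ‖T‖‖f x₀‖/ε`, on a convex set containing the open ball of radius `‖g 0‖/(1 - k) = ε/‖T‖`
around `0`. A map this close to the identity hits `0` on the *closed* ball of radius
`‖g b‖/(1 - k)` around any `b` (surjectivity half of the inverse function theorem), which is just
too large. One Newton step `a₁ = -g 0` fixes this: on the compact segment `[0, a₁]` the derivative
bound is some `M < k`, so `‖g a₁‖ ≤ M‖g 0‖`, and the closed ball of radius `‖g a₁‖/(1 - k)`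
around `a₁` lies strictly inside the open one.
-/

open Metric Set

section PerturbationOfIdentity

variable {E : Type*} [NormedAddCommGroup E] [NormedSpace ℝ E]
  {g : E → E} {g' : E → E →L[ℝ] E} {s : Set E} {k : ℝ}

theorem Convex.approximatesLinearOn_id_of_norm_hasFDerivAt_sub_id_le (hs : Convex ℝ s)
    (hg : ∀ w ∈ s, HasFDerivAt g (g' w) w) (hk0 : 0 ≤ k)
    (hk : ∀ w ∈ s, ‖g' w - ContinuousLinearMap.id ℝ E‖ ≤ k) :
    ApproximatesLinearOn g (ContinuousLinearMap.id ℝ E) s ⟨k, hk0⟩ := fun _ hx _ hy =>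
  hs.norm_image_sub_le_of_norm_hasFDerivWithin_le' (fun w hw => (hg w hw).hasFDerivWithinAt)
    hk hy hx

theorem ApproximatesLinearOn.exists_mem_closedBall_eq_zero [CompleteSpace E] {c : NNReal}
    (hg : ApproximatesLinearOn g (ContinuousLinearMap.id ℝ E) s c) (hc : (c : ℝ) < 1) {b : E}
    (hball : closedBall b (‖g b‖ / (1 - c)) ⊆ s) :
    ∃ w ∈ closedBall b (‖g b‖ / (1 - c)), g w = 0 := by
  let idInv : (ContinuousLinearMap.id ℝ E).NonlinearRightInverse :=
    { toFun := id, nnnorm := 1, bound' := by simp, right_inv' := fun _ => rfl }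
  have hradius : ((idInv.nnnorm : ℝ)⁻¹ - c) * (‖g b‖ / (1 - c)) = ‖g b‖ := by
    simp only [idInv, NNReal.coe_one, inv_one]
    field_simp [(sub_pos.2 hc).ne']
  refine hg.surjOn_closedBall_of_nonlinearRightInverse idInv
    (div_nonneg (norm_nonneg _) (sub_pos.2 hc).le) hball ?_
  rw [hradius, mem_closedBall, dist_zero_left]

theorem Convex.exists_lt_norm_newtonStep_le (hs : Convex ℝ s)
    (hg : ∀ w ∈ s, HasFDerivAt g (g' w) w) (hg' : ContinuousOn g' s)
    (hk : ∀ w ∈ s, ‖g' w - ContinuousLinearMap.id ℝ E‖ < k) {a : E} (ha : a ∈ s)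
    (ha₁ : a - g a ∈ s) :
    ∃ M < k, ‖g (a - g a)‖ ≤ M * ‖g a‖ := by
  have hseg : segment ℝ a (a - g a) ⊆ s := hs.segment_subset ha ha₁
  have hcompact : IsCompact (segment ℝ a (a - g a)) :=
    segment_eq_image_lineMap ℝ a (a - g a) ▸ isCompact_Icc.image AffineMap.lineMap_continuous
  obtain ⟨z, hz, hmax⟩ := hcompact.exists_isMaxOn ⟨a, left_mem_segment ℝ a _⟩
    ((hg'.mono hseg).sub continuousOn_const).norm
  refine ⟨_, hk z (hseg hz), ?_⟩
  simpa using (convex_segment a (a - g a)).norm_image_sub_le_of_norm_hasFDerivWithin_le'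
    (φ := ContinuousLinearMap.id ℝ E) (fun w hw => (hg w (hseg hw)).hasFDerivWithinAt)
    (fun w hw => hmax hw)
    (left_mem_segment ℝ a _) (right_mem_segment ℝ a _)

theorem Convex.exists_eq_zero_of_norm_hasFDerivAt_sub_id_lt [CompleteSpace E]
    (hs : Convex ℝ s)
    (hg : ∀ w ∈ s, HasFDerivAt g (g' w) w) (hg' : ContinuousOn g' s)
    (hk : ∀ w ∈ s, ‖g' w - ContinuousLinearMap.id ℝ E‖ < k) (hk1 : k < 1) {a : E} (ha : a ∈ s)
    (hball : ball a (‖g a‖ / (1 - k)) ⊆ s) :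
    ∃ w ∈ s, g w = 0 := by
  by_cases hga : g a = 0
  · exact ⟨a, ha, hga⟩
  have hk0 : 0 < k := (norm_nonneg _).trans_lt (hk a ha)
  have h1k : 0 < 1 - k := sub_pos.2 hk1
  set r := ‖g a‖ / (1 - k) with hr
  have hr0 : 0 < r := div_pos (norm_pos_iff.2 hga) h1k
  have hstep : dist (a - g a) a = (1 - k) * r := by
    rw [dist_eq_norm, sub_sub_cancel_left, norm_neg, hr, mul_div_cancel₀ _ h1k.ne']
  have ha₁ : a - g a ∈ ball a r := by
    rw [mem_ball, hstep]
    nlinarith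
  obtain ⟨M, hMk, hM⟩ := hs.exists_lt_norm_newtonStep_le hg hg' hk ha (hball ha₁)
  have hsub : closedBall (a - g a) (‖g (a - g a)‖ / (1 - k)) ⊆ ball a r := by
    intro w hw
    have hρ : ‖g (a - g a)‖ / (1 - k) ≤ M * r := by
      rw [hr, mul_div_assoc']
      exact div_le_div_of_nonneg_right hM h1k.le
    rw [mem_ball]
    calc dist w a ≤ dist w (a - g a) + dist (a - g a) a := dist_triangle _ _ _
      _ ≤ M * r + (1 - k) * r := by rw [hstep]; linarith [mem_closedBall.1 hw]
      _ < r := by nlinarith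
  obtain ⟨w, hw, hgw⟩ := (hs.approximatesLinearOn_id_of_norm_hasFDerivAt_sub_id_le hg hk0.le
    fun w hw => (hk w hw).le).exists_mem_closedBall_eq_zero hk1 (hsub.trans hball)
  exact ⟨w, hball (hsub hw), hgw⟩

end PerturbationOfIdentity

theorem effective_implicit_function_theorem_general
    {V W : Type*} [NormedAddCommGroup V] [NormedSpace ℝ V]
    [NormedAddCommGroup W] [NormedSpace ℝ W] [FiniteDimensional ℝ W]
    (x₀ : V) (ε : ℝ) (hε : 0 < ε) (f : V → W)
    (hf : ContDiffOn ℝ 1 f (Metric.ball x₀ ε))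
    (T : W →L[ℝ] V)
    (hT : ∀ x ∈ Metric.ball x₀ ε,
      ‖(fderiv ℝ f x).comp T - ContinuousLinearMap.id ℝ W‖ < 1 - ‖T‖ * ‖f x₀‖ / ε) :
    ∃ x ∈ Metric.ball x₀ ε, f x = 0 := by
  have hx₀ : x₀ ∈ ball x₀ ε := mem_ball_self hε
  by_cases hfx₀ : f x₀ = 0
  · exact ⟨x₀, hx₀, hfx₀⟩
  have : Nontrivial W := ⟨⟨f x₀, 0, hfx₀⟩⟩
  have hT0 : 0 < ‖T‖ := norm_pos_iff.2 fun h => by simpa [h] using hT x₀ hx₀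
  set k := 1 - ‖T‖ * ‖f x₀‖ / ε with hk
  have hradius : ‖f x₀‖ / (1 - k) = ε / ‖T‖ := by
    rw [hk]
    field_simp
    ring
  have hball : ball 0 (ε / ‖T‖) ⊆ T ⁻¹' ball 0 ε := fun w hw => by
    rw [mem_ball_zero_iff, lt_div_iff₀' hT0] at hw
    exact mem_ball_zero_iff.2 ((T.le_opNorm w).trans_lt hw)
  have hmaps : MapsTo (fun w => x₀ + T w) (T ⁻¹' ball 0 ε) (ball x₀ ε) := fun w hw => by
    simpa [mem_ball_iff_norm] using hw
  have hf' : ∀ x ∈ ball x₀ ε, HasFDerivAt f (fderiv ℝ f x) x := fun x hx =>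
    ((hf.differentiableOn one_ne_zero x hx).differentiableAt
      (isOpen_ball.mem_nhds hx)).hasFDerivAt
  obtain ⟨w, hw, hfw⟩ := ((convex_ball 0 ε).linear_preimage T.toLinearMap
    ).exists_eq_zero_of_norm_hasFDerivAt_sub_id_lt (g := fun w => f (x₀ + T w)) (a := 0)
    (fun w hw => (hf' _ (hmaps hw)).comp w (T.hasFDerivAt.const_add x₀))
    (((hf.continuousOn_fderiv_of_isOpen isOpen_ball le_rfl).comp (by fun_prop) hmaps).clm_comp
      continuousOn_const)
    (fun w hw => hT _ (hmaps hw)) (sub_lt_self 1 (by positivity)) (by simpa)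
    (by simpa [hradius] using hball)
  exact ⟨_, hmaps hw, hfw⟩

/-- Effective implicit function theorem of Cohn–Kumar–Minton (existence part):
Let `V`, `W` be finite-dimensional normed real vector spaces, `x₀ ∈ V`, `ε > 0`, and let
`f` be `C¹` on the open ball `B(x₀, ε)`. If `T : W → V` is a linear operator such that
`‖Df(x) ∘ T − id_W‖ < 1 − ‖T‖·‖f(x₀)‖/ε` for all `x ∈ B(x₀, ε)`, then there is
`x* ∈ B(x₀, ε)` with `f(x*) = 0`. -/
theorem effective_implicit_function_theorem
    {V W : Type*} [NormedAddCommGroup V] [NormedSpace ℝ V] [FiniteDimensional ℝ V]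
    [NormedAddCommGroup W] [NormedSpace ℝ W] [FiniteDimensional ℝ W]
    (x₀ : V) (ε : ℝ) (hε : 0 < ε) (f : V → W)
    (hf : ContDiffOn ℝ 1 f (Metric.ball x₀ ε))
    (T : W →L[ℝ] V)
    (hT : ∀ x ∈ Metric.ball x₀ ε,
      ‖(fderiv ℝ f x).comp T - ContinuousLinearMap.id ℝ W‖ < 1 - ‖T‖ * ‖f x₀‖ / ε) :
    ∃ x ∈ Metric.ball x₀ ε, f x = 0 :=
  effective_implicit_function_theorem_general x₀ ε hε f hf T hT
end

section
/- For every p ∈ [1, 1.58] there exists a unique triple (x, y, z) of real numbers satisfying z ≥ x ≥ y ≥ 0, x^p + y^p + z^p = 1, (x−y)^p + (z−x)^p + (y+z)^p = 1, and 3(−x+y+z)^p = 1. -/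
/-!
Put `s = -x + y + z`, `a = x - y`, `b = z - x`, so that `(x, y, z) = (s + a - b, s - b, s + a)`:
the third equation says `3 s^p = 1` and the constraints say `a ≥ 0`, `0 ≤ b ≤ s`. The first
equation `F(a, b) = 1` is strictly increasing in `a`, so it defines `a = a(b)` for `b ∈ [0, s]`,
and the second becomes `φ(b) := G(a(b), b) = 1`. As `φ(0) = 2^p / 3 < 1` (this is where
`p ≤ 1.58 < log₂ 3` enters) and `φ(s) = 4/3`, a root exists. It is unique because `φ' > 0`:
by implicit differentiation `φ'` has the sign of the Jacobian `F_a G_b - F_b G_a`, which is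
positive by the subadditivity of `t ↦ t^(p-1)` for `p < 2`.
-/

open Set Filter Topology

theorem Real.rpow_add_lt_add_rpow {x y q : ℝ} (hx : 0 < x) (hy : 0 < y) (hq : q < 1) :
    (x + y) ^ q < x ^ q + y ^ q := by
  have hxy : 0 < x + y := add_pos hx hy
  have hq' : q - 1 < 0 := by linarith
  calc (x + y) ^ q = (x + y) ^ (q - 1) * x + (x + y) ^ (q - 1) * y := by
        rw [← mul_add, Real.rpow_sub_one hxy.ne', div_mul_cancel₀ _ hxy.ne']
    _ < x ^ (q - 1) * x + y ^ (q - 1) * y := by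
        have hx' := Real.rpow_lt_rpow_of_neg hx (lt_add_of_pos_right x hy) hq'
        have hy' := Real.rpow_lt_rpow_of_neg hy (lt_add_of_pos_left y hx) hq'
        exact add_lt_add (mul_lt_mul_of_pos_right hx' hx) (mul_lt_mul_of_pos_right hy' hy)
    _ = x ^ q + y ^ q := by
        rw [Real.rpow_sub_one hx.ne', Real.rpow_sub_one hy.ne', div_mul_cancel₀ _ hx.ne',
          div_mul_cancel₀ _ hy.ne']

theorem exists_mem_uIcc_sub_eq_mul_sub {f f' : ℝ → ℝ} (hf : ∀ x, HasDerivAt f (f' x) x)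
    (a b : ℝ) : ∃ c ∈ uIcc a b, f b - f a = f' c * (b - a) := by
  have hfc : Continuous f := continuous_iff_continuousAt.2 fun x => (hf x).continuousAt
  rcases lt_trichotomy a b with hab | rfl | hab
  · obtain ⟨c, hc, h⟩ := exists_hasDerivAt_eq_slope f f' hab hfc.continuousOn fun x _ => hf x
    exact ⟨c, Icc_subset_uIcc (Ioo_subset_Icc_self hc),
      by rw [h, div_mul_cancel₀ _ (sub_ne_zero.2 hab.ne')]⟩
  · exact ⟨a, left_mem_uIcc, by simp⟩
  · obtain ⟨c, hc, h⟩ := exists_hasDerivAt_eq_slope f f' hab hfc.continuousOn fun x _ => hf x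
    refine ⟨c, Icc_subset_uIcc' (Ioo_subset_Icc_self hc), ?_⟩
    rw [h, ← neg_sub a b, mul_neg, div_mul_cancel₀ _ (sub_ne_zero.2 hab.ne'), neg_sub]

theorem continuousWithinAt_of_implicit {f : ℝ → ℝ → ℝ} {g : ℝ → ℝ} {I S : Set ℝ} {b₀ c : ℝ}
    (hI : I.OrdConnected) (hmono : ∀ b ∈ S, StrictMonoOn (f · b) I) (hgI : ∀ b ∈ S, g b ∈ I)
    (hg : ∀ b ∈ S, f (g b) b = c) (hf : ∀ a, ContinuousAt (f a) b₀) (hb₀ : b₀ ∈ S) :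
    ContinuousWithinAt g S b₀ := by
  refine tendsto_order.2 ⟨fun a ha => ?_, fun a ha => ?_⟩
  · by_cases haI : a ∈ I
    · have hlt : f a b₀ < c := hg b₀ hb₀ ▸ hmono b₀ hb₀ haI (hgI b₀ hb₀) ha
      filter_upwards [nhdsWithin_le_nhds ((hf a).eventually (gt_mem_nhds hlt)),
        self_mem_nhdsWithin] with b hb hbS
      exact ((hmono b hbS).lt_iff_lt haI (hgI b hbS)).1 (hg b hbS ▸ hb)
    · filter_upwards [self_mem_nhdsWithin] with b hbS
      by_contra! h
      exact haI (hI.out (hgI b hbS) (hgI b₀ hb₀) ⟨h, ha.le⟩)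
  · by_cases haI : a ∈ I
    · have hlt : c < f a b₀ := hg b₀ hb₀ ▸ hmono b₀ hb₀ (hgI b₀ hb₀) haI ha
      filter_upwards [nhdsWithin_le_nhds ((hf a).eventually (lt_mem_nhds hlt)),
        self_mem_nhdsWithin] with b hb hbS
      exact ((hmono b hbS).lt_iff_lt (hgI b hbS) haI).1 (hg b hbS ▸ hb)
    · filter_upwards [self_mem_nhdsWithin] with b hbS
      by_contra! h
      exact haI (hI.out (hgI b₀ hb₀) (hgI b hbS) ⟨ha.le, h⟩)

-- Only partial derivatives are assumed: the mean value theorem in the first variable replaces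
-- the joint differentiability required by the general implicit function theorem.
theorem hasDerivAt_of_implicit {f fa : ℝ → ℝ → ℝ} {g : ℝ → ℝ} {b₀ fb : ℝ}
    (hfa : ∀ a b, HasDerivAt (f · b) (fa a b) a)
    (hfa_cont : ContinuousAt (Function.uncurry fa) (g b₀, b₀)) (hfa₀ : fa (g b₀) b₀ ≠ 0)
    (hfb : HasDerivAt (f (g b₀)) fb b₀) (hg_cont : ContinuousAt g b₀)
    (hg : ∀ᶠ b in 𝓝 b₀, f (g b) b = f (g b₀) b₀) :
    HasDerivAt g (-fb / fa (g b₀) b₀) b₀ := by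
  choose ξ hξ hξ_eq using fun b => exists_mem_uIcc_sub_eq_mul_sub (hfa · b) (g b₀) (g b)
  have hξ_lim : Tendsto ξ (𝓝 b₀) (𝓝 (g b₀)) := by
    have hmin : Tendsto (fun b => g b₀ ⊓ g b) (𝓝 b₀) (𝓝 (g b₀)) := by
      simpa using (tendsto_const_nhds (x := g b₀)).min hg_cont.tendsto
    have hmax : Tendsto (fun b => g b₀ ⊔ g b) (𝓝 b₀) (𝓝 (g b₀)) := by
      simpa using (tendsto_const_nhds (x := g b₀)).max hg_cont.tendsto
    exact tendsto_of_tendsto_of_tendsto_of_le_of_le hmin hmax (fun b => (hξ b).1)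
      fun b => (hξ b).2
  have hfaξ : Tendsto (fun b => fa (ξ b) b) (𝓝 b₀) (𝓝 (fa (g b₀) b₀)) :=
    hfa_cont.tendsto.comp (hξ_lim.prodMk_nhds tendsto_id)
  rw [hasDerivAt_iff_tendsto_slope] at hfb ⊢
  refine (hfb.neg.div (hfaξ.mono_left nhdsWithin_le_nhds) hfa₀).congr' ?_
  filter_upwards [nhdsWithin_le_nhds hg, nhdsWithin_le_nhds (hfaξ.eventually_ne hfa₀),
    self_mem_nhdsWithin] with b hb hne hb₀
  have hsub : b - b₀ ≠ 0 := sub_ne_zero.2 hb₀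
  rw [Pi.div_apply, slope_def_field, slope_def_field]
  field_simp
  linear_combination hξ_eq b - hb

-- With `q = p - 1` and `σ = s`, this is `(F_a G_b - F_b G_a) / p² > 0` at the point `(a, b)`.
theorem jacobian_pos {q σ a b : ℝ} (hq₀ : 0 ≤ q) (hq₁ : q < 1) (ha : 0 < a) (hb : 0 < b)
    (hbσ : b < σ) :
    0 < (a ^ q + (2 * σ + a - b) ^ q) * ((σ + a - b) ^ q + (σ - b) ^ q)
      + (b ^ q - (2 * σ + a - b) ^ q) * ((σ + a - b) ^ q + (σ + a) ^ q) := by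
  have hE : 0 ≤ σ - b := by linarith
  have hD : 0 < σ + a - b := by linarith
  have hG : 0 ≤ σ + a := by linarith
  have hC : 0 ≤ 2 * σ + a - b := by linarith
  have hab : 0 ≤ a + b := by linarith
  have subadd {x y : ℝ} (hx : 0 ≤ x) (hy : 0 ≤ y) : (x + y) ^ q ≤ x ^ q + y ^ q :=
    Real.rpow_add_le_add_rpow hx hy hq₀ hq₁.le
  have key : (2 * σ + a - b) ^ q * (σ + a) ^ q < (2 * σ + a - b) ^ q * (σ - b) ^ q
      + a ^ q * (σ - b) ^ q + b ^ q * (σ + a) ^ q + (a ^ q + b ^ q) * (σ + a - b) ^ q :=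
    calc (2 * σ + a - b) ^ q * (σ + a) ^ q
        ≤ (2 * σ + a - b) ^ q * ((σ - b) ^ q + (a + b) ^ q) := by
          gcongr
          simpa only [sub_add_add_cancel] using subadd hE hab
      _ = (2 * σ + a - b) ^ q * (σ - b) ^ q
          + ((a * (σ - b) + b * (σ + a)) + (a + b) * (σ + a - b)) ^ q := by
          rw [mul_add, ← Real.mul_rpow hC hab]
          congr 2
          ring
      _ ≤ (2 * σ + a - b) ^ q * (σ - b) ^ q
          + ((a * (σ - b)) ^ q + (b * (σ + a)) ^ q + ((a + b) * (σ + a - b)) ^ q) := by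
          gcongr
          exact (subadd (by positivity) (by positivity)).trans
            (add_le_add_left (subadd (by positivity) (by positivity)) _)
      _ = (2 * σ + a - b) ^ q * (σ - b) ^ q
          + a ^ q * (σ - b) ^ q + b ^ q * (σ + a) ^ q + (a + b) ^ q * (σ + a - b) ^ q := by
          rw [Real.mul_rpow ha.le hE, Real.mul_rpow hb.le hG, Real.mul_rpow hab hD.le]
          ring
      _ < _ := by
          gcongr
          exact Real.rpow_add_lt_add_rpow ha hb hq₁
  linarith

theorem two_rpow_lt_three {p : ℝ} (hp : p ≤ 1.58) : (2 : ℝ) ^ p < 3 := by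
  have h50 : ((2 : ℝ) ^ (1.58 : ℝ)) ^ (50 : ℕ) < 3 ^ (50 : ℕ) := by
    rw [← Real.rpow_natCast, ← Real.rpow_mul zero_le_two]
    norm_num
  calc (2 : ℝ) ^ p ≤ 2 ^ (1.58 : ℝ) := Real.rpow_le_rpow_of_exponent_le one_le_two hp
    _ < 3 := lt_of_pow_lt_pow_left₀ 50 (by norm_num) h50

namespace PowerSystem

noncomputable def F (p s a b : ℝ) : ℝ := (s + a - b) ^ p + (s - b) ^ p + (s + a) ^ p

noncomputable def G (p s a b : ℝ) : ℝ := a ^ p + b ^ p + (2 * s + a - b) ^ p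

variable {p s a b : ℝ}

theorem F_coords (x y z : ℝ) : F p (-x + y + z) (x - y) (z - x) = x ^ p + y ^ p + z ^ p := by
  rw [F, show -x + y + z + (x - y) - (z - x) = x by ring, show -x + y + z - (z - x) = y by ring,
    show -x + y + z + (x - y) = z by ring]

theorem G_coords (x y z : ℝ) :
    G p (-x + y + z) (x - y) (z - x) = (x - y) ^ p + (z - x) ^ p + (y + z) ^ p := by
  rw [G, show 2 * (-x + y + z) + (x - y) - (z - x) = y + z by ring]

theorem F_zero (s b : ℝ) : F p s 0 b = 2 * (s - b) ^ p + s ^ p := by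
  simp only [F, add_zero]; ring

theorem hasDerivAt_F_fst (hp : 1 ≤ p) (s a b : ℝ) :
    HasDerivAt (F p s · b) (p * ((s + a - b) ^ (p - 1) + (s + a) ^ (p - 1))) a := by
  have h₁ := (((hasDerivAt_id' a).const_add s).sub_const b).rpow_const (p := p) (Or.inr hp)
  have h₃ := ((hasDerivAt_id' a).const_add s).rpow_const (p := p) (Or.inr hp)
  exact ((h₁.add_const ((s - b) ^ p)).add h₃).congr_deriv (by ring)

theorem hasDerivAt_F_snd (hp : 1 ≤ p) (s a b : ℝ) :
    HasDerivAt (F p s a) (-(p * ((s + a - b) ^ (p - 1) + (s - b) ^ (p - 1)))) b := by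
  have h₁ := ((hasDerivAt_id' b).const_sub (s + a)).rpow_const (p := p) (Or.inr hp)
  have h₂ := ((hasDerivAt_id' b).const_sub s).rpow_const (p := p) (Or.inr hp)
  exact ((h₁.add h₂).add_const ((s + a) ^ p)).congr_deriv (by ring)

theorem strictMonoOn_F_fst (hp : 0 < p) (hb : b ∈ Icc 0 s) : StrictMonoOn (F p s · b) (Ici 0) := by
  intro a₁ (ha₁ : 0 ≤ a₁) a₂ _ h
  have h₁ : (s + a₁ - b) ^ p < (s + a₂ - b) ^ p :=
    Real.rpow_lt_rpow (by linarith [hb.2]) (by linarith) hp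
  have h₃ : (s + a₁) ^ p < (s + a₂) ^ p :=
    Real.rpow_lt_rpow (by linarith [hb.1, hb.2]) (by linarith) hp
  simp only [F]
  linarith

theorem exists_F_eq_one (hp : 1 ≤ p) (hs : 3 * s ^ p = 1) (hb : b ∈ Icc 0 s) :
    ∃ a, 0 ≤ a ∧ F p s a b = 1 := by
  have hcont : ContinuousOn (F p s · b) (Icc 0 1) := fun a _ =>
    (hasDerivAt_F_fst hp s a b).continuousAt.continuousWithinAt
  have h₀ : F p s 0 b ≤ 1 := by
    have := Real.rpow_le_rpow (sub_nonneg.2 hb.2) (sub_le_self s hb.1) (by linarith : 0 ≤ p)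
    rw [F_zero]
    linarith
  have h₁ : 1 ≤ F p s 1 b := by
    have := Real.one_le_rpow (by linarith [hb.1, hb.2] : 1 ≤ s + 1) (by linarith : 0 ≤ p)
    have := Real.rpow_nonneg (by linarith [hb.2] : 0 ≤ s + 1 - b) p
    have := Real.rpow_nonneg (sub_nonneg.2 hb.2) p
    simp only [F]
    linarith
  obtain ⟨a, ha, hFa⟩ := intermediate_value_Icc zero_le_one hcont ⟨h₀, h₁⟩
  exact ⟨a, ha.1, hFa⟩

noncomputable def rootA (p s b : ℝ) : ℝ :=
  Classical.epsilon fun a => 0 ≤ a ∧ F p s a b = 1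

theorem rootA_spec (hp : 1 ≤ p) (hs : 3 * s ^ p = 1) (hb : b ∈ Icc 0 s) :
    0 ≤ rootA p s b ∧ F p s (rootA p s b) b = 1 :=
  Classical.epsilon_spec (exists_F_eq_one hp hs hb)

theorem eq_rootA (hp : 1 ≤ p) (hs : 3 * s ^ p = 1) (hb : b ∈ Icc 0 s) (ha : 0 ≤ a)
    (hF : F p s a b = 1) : a = rootA p s b :=
  (strictMonoOn_F_fst (by linarith) hb).injOn ha (rootA_spec hp hs hb).1
    (hF.trans (rootA_spec hp hs hb).2.symm)

theorem rootA_pos (hp : 1 ≤ p) (hs : 3 * s ^ p = 1) (hb : b ∈ Ioc 0 s) : 0 < rootA p s b := by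
  obtain ⟨ha, hF⟩ := rootA_spec hp hs (Ioc_subset_Icc_self hb)
  refine ha.lt_of_ne fun h => ?_
  have := Real.rpow_lt_rpow (sub_nonneg.2 hb.2) (sub_lt_self s hb.1) (by linarith : 0 < p)
  rw [← h, F_zero] at hF
  linarith

theorem continuousOn_rootA (hp : 1 ≤ p) (hs : 3 * s ^ p = 1) :
    ContinuousOn (rootA p s) (Icc 0 s) := fun b hb =>
  continuousWithinAt_of_implicit ordConnected_Ici
    (fun _ hb => strictMonoOn_F_fst (by linarith) hb) (fun _ hb => (rootA_spec hp hs hb).1)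
    (fun _ hb => (rootA_spec hp hs hb).2) (fun a => (hasDerivAt_F_snd hp s a b).continuousAt) hb

theorem hasDerivAt_rootA (hp : 1 ≤ p) (hs : 3 * s ^ p = 1) (hb : b ∈ Ioo 0 s) :
    HasDerivAt (rootA p s)
      (((s + rootA p s b - b) ^ (p - 1) + (s - b) ^ (p - 1)) /
        ((s + rootA p s b - b) ^ (p - 1) + (s + rootA p s b) ^ (p - 1))) b := by
  have hnhds : Icc 0 s ∈ 𝓝 b := Icc_mem_nhds hb.1 hb.2
  obtain ⟨ha, hF⟩ := rootA_spec hp hs (Ioo_subset_Icc_self hb)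
  have hcont : Continuous
      (Function.uncurry fun a b => p * ((s + a - b) ^ (p - 1) + (s + a) ^ (p - 1))) := by
    have := Real.continuous_rpow_const (by linarith : 0 ≤ p - 1)
    fun_prop
  have hpos : 0 < (s + rootA p s b - b) ^ (p - 1) + (s + rootA p s b) ^ (p - 1) :=
    add_pos_of_nonneg_of_pos (Real.rpow_nonneg (by linarith [hb.2]) _)
      (Real.rpow_pos_of_pos (by linarith [hb.1, hb.2]) _)
  have := hasDerivAt_of_implicit (hasDerivAt_F_fst hp s) hcont.continuousAt (by positivity)
    (hasDerivAt_F_snd hp s _ b) ((continuousOn_rootA hp hs).continuousAt hnhds)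
    (by filter_upwards [hnhds] with b' hb' using (rootA_spec hp hs hb').2.trans hF.symm)
  rwa [neg_neg, mul_div_mul_left _ _ (by linarith : p ≠ 0)] at this

noncomputable def phi (p s b : ℝ) : ℝ := G p s (rootA p s b) b

theorem continuousOn_phi (hp : 1 ≤ p) (hs : 3 * s ^ p = 1) :
    ContinuousOn (phi p s) (Icc 0 s) := by
  have hg := continuousOn_rootA hp hs
  have hp₀ : 0 ≤ p := by linarith
  exact ((hg.rpow_const fun _ _ => Or.inr hp₀).add
    (continuousOn_id.rpow_const fun _ _ => Or.inr hp₀)).add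
    (((continuousOn_const.add hg).sub continuousOn_id).rpow_const fun _ _ => Or.inr hp₀)

theorem deriv_phi_pos (hp : 1 ≤ p) (hp₂ : p < 2) (hs : 3 * s ^ p = 1) (hb : b ∈ Ioo 0 s) :
    0 < deriv (phi p s) b := by
  have hg := hasDerivAt_rootA hp hs hb
  have h₁ := hg.rpow_const (p := p) (Or.inr hp)
  have h₂ := Real.hasDerivAt_rpow_const (x := b) (Or.inr hp)
  have h₃ := (((hasDerivAt_const b (2 * s)).add hg).sub (hasDerivAt_id b)).rpow_const
    (p := p) (Or.inr hp)
  have ha := rootA_pos hp hs ⟨hb.1, hb.2.le⟩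
  have hM : 0 < (s + rootA p s b - b) ^ (p - 1) + (s + rootA p s b) ^ (p - 1) :=
    add_pos_of_nonneg_of_pos (Real.rpow_nonneg (by linarith [hb.2]) _)
      (Real.rpow_pos_of_pos (by linarith [hb.1, hb.2]) _)
  have hJ := jacobian_pos (q := p - 1) (by linarith) (by linarith) ha hb.1 hb.2
  have hφ : HasDerivAt (phi p s) _ b := (h₁.add h₂).add h₃
  rw [hφ.deriv]
  simp only [Pi.add_apply, Pi.sub_apply, id]
  generalize rootA p s b = a at *
  refine (div_pos (mul_pos (by linarith : 0 < p) hJ) hM).trans_eq ?_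
  field_simp
  ring

theorem strictMonoOn_phi (hp : 1 ≤ p) (hp₂ : p < 2) (hs : 3 * s ^ p = 1) :
    StrictMonoOn (phi p s) (Icc 0 s) :=
  strictMonoOn_of_deriv_pos (convex_Icc 0 s) (continuousOn_phi hp hs) fun b hb =>
    deriv_phi_pos hp hp₂ hs (by rwa [interior_Icc] at hb)

theorem phi_zero (hp : 1 ≤ p) (hs₀ : 0 ≤ s) (hs : 3 * s ^ p = 1) : phi p s 0 = (2 * s) ^ p := by
  have h : rootA p s 0 = 0 :=
    (eq_rootA hp hs ⟨le_rfl, hs₀⟩ le_rfl (by rw [F_zero, sub_zero]; linarith)).symm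
  simp [phi, G, h, Real.zero_rpow (by linarith : p ≠ 0)]

theorem phi_self (hp : 1 ≤ p) (hs₀ : 0 ≤ s) (hs : 3 * s ^ p = 1) : phi p s s = 1 + s ^ p := by
  obtain ⟨-, hF⟩ := rootA_spec hp hs ⟨hs₀, le_rfl⟩
  rw [F, add_sub_cancel_left, sub_self, Real.zero_rpow (by linarith)] at hF
  rw [phi, G, show 2 * s + rootA p s s - s = s + rootA p s s by ring]
  linarith

theorem existsUnique_phi_eq_one (hp : 1 ≤ p) (hp₂ : p ≤ 1.58) (hs₀ : 0 ≤ s)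
    (hs : 3 * s ^ p = 1) : ∃! b, b ∈ Icc 0 s ∧ phi p s b = 1 := by
  have h₀ : phi p s 0 < 1 := by
    rw [phi_zero hp hs₀ hs, Real.mul_rpow zero_le_two hs₀]
    nlinarith [two_rpow_lt_three hp₂]
  have h₁ : 1 < phi p s s := by
    rw [phi_self hp hs₀ hs]
    linarith
  obtain ⟨b, hb, hφ⟩ := intermediate_value_Icc hs₀ (continuousOn_phi hp hs) ⟨h₀.le, h₁.le⟩
  exact ⟨b, ⟨hb, hφ⟩, fun b' hb' =>
    (strictMonoOn_phi hp (by linarith) hs).injOn hb'.1 hb (hb'.2.trans hφ.symm)⟩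

end PowerSystem

/-- For every `p ∈ [1, 1.58]` there is a unique triple `(x, y, z)` of real numbers with
`z ≥ x ≥ y ≥ 0`, `x^p + y^p + z^p = 1`, `(x−y)^p + (z−x)^p + (y+z)^p = 1`, and
`3(−x+y+z)^p = 1`. -/
theorem unique_solution_of_system :
    ∀ p ∈ Set.Icc (1 : ℝ) 1.58,
      ∃! t : ℝ × ℝ × ℝ,
        t.2.2 ≥ t.1 ∧ t.1 ≥ t.2.1 ∧ t.2.1 ≥ 0 ∧
        t.1 ^ p + t.2.1 ^ p + t.2.2 ^ p = 1 ∧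
        (t.1 - t.2.1) ^ p + (t.2.2 - t.1) ^ p + (t.2.1 + t.2.2) ^ p = 1 ∧
        3 * (-t.1 + t.2.1 + t.2.2) ^ p = 1 := by
  rintro p ⟨hp, hp₂⟩
  set s : ℝ := (1 / 3) ^ p⁻¹
  have hs₀ : 0 ≤ s := by positivity
  have hs : 3 * s ^ p = 1 := by
    rw [Real.rpow_inv_rpow (by norm_num) (by linarith)]
    norm_num
  obtain ⟨b, ⟨hb, hφ⟩, hb_unique⟩ := PowerSystem.existsUnique_phi_eq_one hp hp₂ hs₀ hs
  obtain ⟨ha, hF⟩ := PowerSystem.rootA_spec hp hs hb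
  set a := PowerSystem.rootA p s b
  have hsum : -(s + a - b) + (s - b) + (s + a) = s := by ring
  refine ⟨(s + a - b, s - b, s + a),
    ⟨by linarith [hb.1], by linarith, by linarith [hb.2], hF, ?_, by rwa [hsum]⟩, ?_⟩
  · rw [← PowerSystem.G_coords, ← hφ, PowerSystem.phi]
    congr 3 <;> ring
  rintro ⟨x, y, z⟩ ⟨hzx, hxy, hy, h₁, h₂, h₃⟩
  have hsum' : -x + y + z = s :=
    (Real.rpow_left_inj (by linarith) hs₀ (by linarith : p ≠ 0)).1 (by linarith)
  have hzx' : z - x ∈ Icc 0 s := ⟨by linarith, by linarith⟩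
  have hxy' : x - y = PowerSystem.rootA p s (z - x) :=
    PowerSystem.eq_rootA hp hs hzx' (by linarith) (by rw [← hsum', PowerSystem.F_coords, h₁])
  obtain rfl : z - x = b := hb_unique _
    ⟨hzx', by rw [PowerSystem.phi, ← hxy', ← hsum', PowerSystem.G_coords, h₂]⟩
  simp only [Prod.mk.injEq]
  exact ⟨by linarith, by linarith, by linarith⟩
end

section
/- For every p ∈ [1.5849625, 1.5849625 + 10⁻¹⁰] there exists a triple (x, y, z) of real numbers with max(|x − 0.499999999842|, |y − 0.499999124646|, |z − 0.500000875038|) < 2·10⁻⁷ satisfying z ≥ x ≥ y ≥ 0, x^p + y^p + z^p = 1, (x−y)^p + (z−x)^p + (y+z)^p = 1, and 3(−x+y+z)^p = 1. -/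
/-!
Put `t = 3 ^ (-1 / p)` and look for the solution as `x = t + w`, `y = t - u`, `z = t + u + w`.
Then `-x + y + z = t` gives the third equation, and `(x - y, z - x, y + z) = (u + w, u, 2t + w)`,
so the other two equations become `eqn₁ = 0` and `eqn₂ = 0`. For `p` just below `log₂ 3`,
`(2t) ^ p = 2 ^ p / 3` is just below `1`, and `eqn₂ = 0` balances `2 u ^ p` against the deficit
`1 - (2t) ^ p ≈ 5·10⁻¹⁰`, which puts `u` near `8.7·10⁻⁷` and `w` near `0`. As `eqn₂` is strictly
increasing in `w`, it defines `w` as a continuous function of `u ∈ [7·10⁻⁷, 1.05·10⁻⁶]`, and along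
this curve `eqn₁ ≈ 2 p t ^ (p - 1) w` changes sign. The numerical input is
`3 - 2 ^ p ∈ [1.2·10⁻⁹, 1.59·10⁻⁹]`, which needs `log 2` to twelve digits; it comes from Taylor
bounds for `exp`.
-/

open Real Set Function
open scoped Nat

local notation "Iₚ" => Icc (1.5849625 : ℝ) (1.5849625 + 1e-10)

lemma tangent_le_rpow_add {s h p : ℝ} (hs : 0 < s) (hsh : 0 ≤ s + h) (hp : 1 ≤ p) :
    s ^ p + p * s ^ (p - 1) * h ≤ (s + h) ^ p := by
  have hx : 0 ≤ 1 + h / s := by rw [← div_self hs.ne', ← add_div]; positivity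
  have hbern := one_add_mul_self_le_rpow_one_add (s := h / s) (by linarith) hp
  calc s ^ p + p * s ^ (p - 1) * h = s ^ p * (1 + p * (h / s)) := by
        rw [rpow_sub_one hs.ne']; field_simp
    _ ≤ s ^ p * (1 + h / s) ^ p := by gcongr
    _ = (s + h) ^ p := by
        rw [← mul_rpow hs.le hx, mul_add, mul_one, mul_div_cancel₀ _ hs.ne']

lemma rpow_add_le_quadratic {s h p : ℝ} (hs : 0 < s) (hsh : 0 ≤ s + h) (hp₁ : 1 ≤ p)
    (hp₂ : p ≤ 2) :
    (s + h) ^ p ≤ s ^ p + p * s ^ (p - 1) * h + (p - 1) * s ^ (p - 2) * h ^ 2 := by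
  have hx : 0 ≤ 1 + h / s := by rw [← div_self hs.ne', ← add_div]; positivity
  have hbern := rpow_one_add_le_one_add_mul_self (s := h / s) (p := p - 1)
    (by linarith) (by linarith) (by linarith)
  calc (s + h) ^ p = s ^ p * ((1 + h / s) * (1 + h / s) ^ (p - 1)) := by
        rw [← rpow_one_add' hx (by linarith), add_sub_cancel, ← mul_rpow hs.le hx, mul_add,
          mul_one, mul_div_cancel₀ _ hs.ne']
    _ ≤ s ^ p * ((1 + h / s) * (1 + (p - 1) * (h / s))) := by gcongr
    _ = s ^ p + p * s ^ (p - 1) * h + (p - 1) * s ^ (p - 2) * h ^ 2 := by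
        rw [rpow_sub_one hs.ne', rpow_sub hs, rpow_two]; field_simp; ring

lemma rpow_le_of_pow_le_pow {x B p : ℝ} {m n : ℕ} (hn : n ≠ 0) (hx₀ : 0 ≤ x) (hx₁ : x ≤ 1)
    (hB : 0 ≤ B) (hp : (m : ℝ) / n ≤ p) (h : x ^ m ≤ B ^ n) : x ^ p ≤ B := by
  refine (rpow_le_rpow_of_exponent_ge' hx₀ hx₁ (by positivity) hp).trans ?_
  refine le_of_pow_le_pow_left₀ hn hB ?_
  rwa [← rpow_natCast (x ^ _), ← rpow_mul hx₀, div_mul_cancel₀ _ (by exact_mod_cast hn),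
    rpow_natCast]

lemma le_rpow_of_pow_le_pow {x B p : ℝ} {m n : ℕ} (hn : n ≠ 0) (hx₀ : 0 < x) (hx₁ : x ≤ 1)
    (hp : p ≤ (m : ℝ) / n) (h : B ^ n ≤ x ^ m) : B ≤ x ^ p := by
  refine le_trans ?_ (rpow_le_rpow_of_exponent_ge hx₀ hx₁ hp)
  refine le_of_pow_le_pow_left₀ hn (by positivity) ?_
  rwa [← rpow_natCast (x ^ _), ← rpow_mul hx₀.le, div_mul_cancel₀ _ (by exact_mod_cast hn),
    rpow_natCast]

theorem exists_continuousOn_zero_of_strictMonoOn {g : ℝ → ℝ → ℝ} {a b c d : ℝ} (hcd : c ≤ d)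
    (hg₁ : ∀ w ∈ Icc c d, ContinuousOn (g · w) (Icc a b))
    (hg₂ : ∀ u ∈ Icc a b, ContinuousOn (g u) (Icc c d))
    (hmono : ∀ u ∈ Icc a b, StrictMonoOn (g u) (Icc c d))
    (hc : ∀ u ∈ Icc a b, g u c ≤ 0) (hd : ∀ u ∈ Icc a b, 0 ≤ g u d) :
    ∃ V : ℝ → ℝ, ContinuousOn V (Icc a b) ∧ ∀ u ∈ Icc a b, V u ∈ Icc c d ∧ g u (V u) = 0 := by
  have hzero (u) (hu : u ∈ Icc a b) : ∃ w ∈ Icc c d, g u w = 0 :=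
    intermediate_value_Icc hcd (hg₂ u hu) ⟨hc u hu, hd u hu⟩
  choose! V hV hgV using hzero
  refine ⟨V, fun u₀ hu₀ => tendsto_order.2 ⟨fun w hw => ?_, fun w hw => ?_⟩,
    fun u hu => ⟨hV u hu, hgV u hu⟩⟩
  · rcases lt_or_ge w c with hwc | hcw
    · filter_upwards [self_mem_nhdsWithin] with u hu using hwc.trans_le (hV u hu).1
    · have hw' : w ∈ Icc c d := ⟨hcw, hw.le.trans (hV u₀ hu₀).2⟩
      have hneg : g u₀ w < 0 := hgV u₀ hu₀ ▸ hmono u₀ hu₀ hw' (hV u₀ hu₀) hw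
      filter_upwards [(hg₁ w hw' u₀ hu₀).eventually_lt_const hneg, self_mem_nhdsWithin]
        with u hgu hu
      by_contra! hle
      have := ((hmono u hu).le_iff_le (hV u hu) hw').2 hle
      linarith [hgV u hu]
  · rcases lt_or_ge d w with hdw | hwd
    · filter_upwards [self_mem_nhdsWithin] with u hu using (hV u hu).2.trans_lt hdw
    · have hw' : w ∈ Icc c d := ⟨(hV u₀ hu₀).1.trans hw.le, hwd⟩
      have hpos : 0 < g u₀ w := hgV u₀ hu₀ ▸ hmono u₀ hu₀ (hV u₀ hu₀) hw' hw
      filter_upwards [(hg₁ w hw' u₀ hu₀).eventually_const_lt hpos, self_mem_nhdsWithin]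
        with u hgu hu
      by_contra! hle
      have := ((hmono u hu).le_iff_le hw' (hV u hu)).2 hle
      linarith [hgV u hu]

theorem exists_common_zero_of_strictMonoOn {f g : ℝ → ℝ → ℝ} {a b c d : ℝ} (hab : a ≤ b)
    (hcd : c ≤ d) (hf : ContinuousOn (uncurry f) (Icc a b ×ˢ Icc c d))
    (hg : ContinuousOn (uncurry g) (Icc a b ×ˢ Icc c d))
    (hmono : ∀ u ∈ Icc a b, StrictMonoOn (g u) (Icc c d))
    (hc : ∀ u ∈ Icc a b, g u c ≤ 0) (hd : ∀ u ∈ Icc a b, 0 ≤ g u d)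
    (ha : ∀ w ∈ Icc c d, g a w = 0 → 0 ≤ f a w) (hb : ∀ w ∈ Icc c d, g b w = 0 → f b w ≤ 0) :
    ∃ u ∈ Icc a b, ∃ w ∈ Icc c d, f u w = 0 ∧ g u w = 0 := by
  obtain ⟨V, hVcont, hV⟩ := exists_continuousOn_zero_of_strictMonoOn (g := g) hcd
    (fun w hw => hg.comp (continuousOn_id.prodMk continuousOn_const) fun u hu => ⟨hu, hw⟩)
    (fun u hu => hg.comp (continuousOn_const.prodMk continuousOn_id) fun w hw => ⟨hu, hw⟩)
    hmono hc hd
  have hfV : ContinuousOn (fun u => f u (V u)) (Icc a b) :=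
    hf.comp (continuousOn_id.prodMk hVcont) fun u hu => ⟨hu, (hV u hu).1⟩
  have ha' := left_mem_Icc.2 hab
  have hb' := right_mem_Icc.2 hab
  obtain ⟨u, hu, hfu⟩ := intermediate_value_Icc' hab hfV
    ⟨hb _ (hV b hb').1 (hV b hb').2, ha _ (hV a ha').1 (hV a ha').2⟩
  exact ⟨u, hu, V u, (hV u hu).1, hfu, (hV u hu).2⟩

lemma exp_two_mul_mem_Icc_taylor {x : ℝ} (h0 : 0 ≤ x) (h1 : x ≤ 1) :
    exp (2 * x) ∈ Icc ((∑ i ∈ Finset.range 14, x ^ i / i !) ^ 2)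
      ((∑ i ∈ Finset.range 14, x ^ i / i ! + x ^ 14 * 15 / (14 ! * 14)) ^ 2) := by
  rw [two_mul, exp_add, ← sq]
  have hup := exp_bound' h0 h1 (n := 14) (by norm_num)
  norm_num at hup
  exact ⟨pow_le_pow_left₀ (Finset.sum_nonneg fun i _ => by positivity)
      (sum_le_exp_of_nonneg h0 14) 2,
    pow_le_pow_left₀ (exp_pos x).le (by norm_num [Nat.factorial]; linarith) 2⟩

lemma log_two_gt_d12 : 0.693147180548 < log 2 := by
  rw [lt_log_iff_exp_lt two_pos]
  have h := (exp_two_mul_mem_Icc_taylor (x := 0.346573590274) (by norm_num) (by norm_num)).2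
  norm_num [Finset.sum_range_succ, Nat.factorial] at h ⊢
  linarith

lemma log_two_lt_d12 : log 2 < 0.693147180562 := by
  rw [log_lt_iff_lt_exp two_pos]
  have h := (exp_two_mul_mem_Icc_taylor (x := 0.346573590281) (by norm_num) (by norm_num)).1
  norm_num [Finset.sum_range_succ, Nat.factorial] at h ⊢
  linarith

-- The two exponents are `1.5849625 · 0.693147180548` and `(1.5849625 + 10⁻¹⁰) · 0.693147180562`.
lemma three_sub_le_exp : 3 - 1.59e-9 ≤ exp 1.09861228814930945 := by
  have h := (exp_two_mul_mem_Icc_taylor (x := 0.549306144074654725) (by norm_num)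
    (by norm_num)).1
  norm_num [Finset.sum_range_succ, Nat.factorial] at h ⊢
  linarith

lemma exp_le_three_sub : exp 1.0986122882408136430562 ≤ 3 - 1.2e-9 := by
  have h := (exp_two_mul_mem_Icc_taylor (x := 0.5493061441204068215281) (by norm_num)
    (by norm_num)).2
  norm_num [Finset.sum_range_succ, Nat.factorial] at h ⊢
  linarith

lemma two_rpow_mem_Icc {p : ℝ} (hp : p ∈ Iₚ) :
    2 ^ p ∈ Icc (3 - 1.59e-9 : ℝ) (3 - 1.2e-9) := by
  obtain ⟨hp₁, hp₂⟩ := hp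
  rw [rpow_def_of_pos two_pos]
  constructor
  · refine three_sub_le_exp.trans (exp_le_exp.2 ?_)
    nlinarith [log_two_gt_d12]
  · refine (exp_le_exp.2 ?_).trans exp_le_three_sub
    nlinarith [log_two_lt_d12]

noncomputable def rootThird (p : ℝ) : ℝ := (1 / 3 : ℝ) ^ p⁻¹

lemma rootThird_pos (p : ℝ) : 0 < rootThird p := rpow_pos_of_pos (by norm_num) _

lemma rootThird_rpow {p : ℝ} (hp : p ≠ 0) : rootThird p ^ p = 1 / 3 :=
  rpow_inv_rpow (by norm_num) hp

lemma two_mul_rootThird_rpow_mem_Icc {p : ℝ} (hp : p ∈ Iₚ) :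
    (2 * rootThird p) ^ p ∈ Icc (1 - 5.3e-10 : ℝ) (1 - 4e-10) := by
  have h2p := two_rpow_mem_Icc hp
  rw [mul_rpow zero_le_two (rootThird_pos p).le, rootThird_rpow (by linarith [hp.1])]
  constructor <;> linarith [h2p.1, h2p.2]

lemma two_mul_rootThird_mem_Icc {p : ℝ} (hp : p ∈ Iₚ) :
    2 * rootThird p ∈ Icc (1 - 5.3e-10 : ℝ) 1 := by
  have hs := two_mul_rootThird_rpow_mem_Icc hp
  have hs₀ : 0 ≤ 2 * rootThird p := by linarith [rootThird_pos p]
  have hs₁ : 2 * rootThird p ≤ 1 := by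
    by_contra! h
    linarith [hs.2, one_lt_rpow h (by linarith [hp.1] : 0 < p)]
  exact ⟨hs.1.trans (rpow_le_self_of_le_one hs₀ hs₁ (by linarith [hp.1])), hs₁⟩

lemma le_mul_rootThird_rpow_sub_one {p : ℝ} (hp : p ∈ Iₚ) :
    1.05 ≤ p * rootThird p ^ (p - 1) := by
  have ht := two_mul_rootThird_mem_Icc hp
  have ht₀ := rootThird_pos p
  rw [rpow_sub_one ht₀.ne', rootThird_rpow (by linarith [hp.1]), ← mul_div_assoc,
    le_div_iff₀ ht₀]
  linarith [hp.1, ht.2]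

lemma mul_rootThird_rpow_sub_two_le {p : ℝ} (hp : p ∈ Iₚ) :
    (p - 1) * rootThird p ^ (p - 2) ≤ 0.79 := by
  have ht := two_mul_rootThird_mem_Icc hp
  have ht₀ := rootThird_pos p
  rw [rpow_sub ht₀, rpow_two, rootThird_rpow (by linarith [hp.1]), ← mul_div_assoc,
    div_le_iff₀ (by positivity)]
  nlinarith [hp.2, ht.1]

noncomputable def eqn₁ (p t u w : ℝ) : ℝ := (t + w) ^ p + (t - u) ^ p + (t + u + w) ^ p - 1

noncomputable def eqn₂ (p t u w : ℝ) : ℝ := (u + w) ^ p + u ^ p + (2 * t + w) ^ p - 1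

lemma continuous_eqn₁ {p : ℝ} (hp : 0 ≤ p) (t : ℝ) : Continuous (uncurry (eqn₁ p t)) := by
  unfold eqn₁ uncurry
  fun_prop (disch := assumption)

lemma continuous_eqn₂ {p : ℝ} (hp : 0 ≤ p) (t : ℝ) : Continuous (uncurry (eqn₂ p t)) := by
  unfold eqn₂ uncurry
  fun_prop (disch := assumption)

lemma eqn₂_strictMonoOn {p t u c : ℝ} (hp : 0 < p) (hu : 0 ≤ u + c) (ht : 0 ≤ 2 * t + c) :
    StrictMonoOn (eqn₂ p t u) (Ici c) := by
  intro w hw w' _ hlt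
  have h₁ := rpow_lt_rpow (by linarith [mem_Ici.1 hw]) (by linarith : u + w < u + w') hp
  have h₂ := rpow_lt_rpow (by linarith [mem_Ici.1 hw])
    (by linarith : 2 * t + w < 2 * t + w') hp
  unfold eqn₂
  linarith

lemma eqn₁_ge {p t u w : ℝ} (hp : 1 ≤ p) (ht : 0 < t) (ht₃ : t ^ p = 1 / 3) (h₁ : 0 ≤ t + w)
    (h₂ : 0 ≤ t - u) (h₃ : 0 ≤ t + u + w) : 2 * (p * t ^ (p - 1)) * w ≤ eqn₁ p t u w := by
  rw [sub_eq_add_neg] at h₂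
  rw [add_assoc] at h₃
  have e₁ := tangent_le_rpow_add ht h₁ hp
  have e₂ := tangent_le_rpow_add ht h₂ hp
  have e₃ := tangent_le_rpow_add ht h₃ hp
  rw [eqn₁, sub_eq_add_neg t, add_assoc t u]
  linarith

lemma eqn₁_le {p t u w : ℝ} (hp₁ : 1 ≤ p) (hp₂ : p ≤ 2) (ht : 0 < t) (ht₃ : t ^ p = 1 / 3)
    (h₁ : 0 ≤ t + w) (h₂ : 0 ≤ t - u) (h₃ : 0 ≤ t + u + w) :
    eqn₁ p t u w ≤
      2 * (p * t ^ (p - 1)) * w + (p - 1) * t ^ (p - 2) * (w ^ 2 + u ^ 2 + (u + w) ^ 2) := by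
  rw [sub_eq_add_neg] at h₂
  rw [add_assoc] at h₃
  have e₁ := rpow_add_le_quadratic ht h₁ hp₁ hp₂
  have e₂ := rpow_add_le_quadratic ht h₂ hp₁ hp₂
  have e₃ := rpow_add_le_quadratic ht h₃ hp₁ hp₂
  rw [eqn₁, sub_eq_add_neg t, add_assoc t u]
  nlinarith

lemma eqn₂_bottom_nonpos {p u : ℝ} (hp : p ∈ Iₚ) (hu : u ∈ Icc (7e-7 : ℝ) 1.05e-6) :
    eqn₂ p (rootThird p) u (-1e-9) ≤ 0 := by
  obtain ⟨hp₁, hp₂⟩ := hp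
  have hs := two_mul_rootThird_mem_Icc ⟨hp₁, hp₂⟩
  have hsmall : ∀ v ∈ Icc (0 : ℝ) 1.05e-6, v ^ p ≤ 3.5e-10 := fun v hv =>
    rpow_le_of_pow_le_pow (m := 19) (n := 12) (by norm_num) hv.1 (by linarith [hv.2])
      (by norm_num) (by norm_num; linarith)
      ((pow_le_pow_left₀ hv.1 hv.2 19).trans (by norm_num))
  have e₁ := hsmall (u + -1e-9) ⟨by linarith [hu.1], by linarith [hu.2]⟩
  have e₂ := hsmall u ⟨by linarith [hu.1], hu.2⟩
  have e₃ := rpow_le_self_of_le_one (by linarith [hs.1]) (by linarith [hs.2] :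
    2 * rootThird p + -1e-9 ≤ 1) (by linarith : 1 ≤ p)
  rw [eqn₂]
  linarith [hs.2]

lemma eqn₂_top_nonneg {p u : ℝ} (hp : p ∈ Iₚ) (hu : 0 ≤ u) :
    0 ≤ eqn₂ p (rootThird p) u 1e-9 := by
  have hs := two_mul_rootThird_mem_Icc hp
  have hsp := two_mul_rootThird_rpow_mem_Icc hp
  have hs₀ : 0 < 2 * rootThird p := by linarith [hs.1]
  have htan := tangent_le_rpow_add hs₀ (by linarith : 0 ≤ 2 * rootThird p + 1e-9)
    (by linarith [hp.1] : 1 ≤ p)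
  have hcoeff : 2 * rootThird p ≤ (2 * rootThird p) ^ (p - 1) :=
    self_le_rpow_of_le_one hs₀.le hs.2 (by linarith [hp.2])
  have e₁ : 0 ≤ (u + 1e-9) ^ p := by positivity
  have e₂ : 0 ≤ u ^ p := by positivity
  rw [eqn₂]
  nlinarith [hp.1, hs.1, hsp.1]

lemma eqn₂_left_zero_neg {p : ℝ} (hp : p ∈ Iₚ) : eqn₂ p (rootThird p) 7e-7 0 < 0 := by
  have hsp := two_mul_rootThird_rpow_mem_Icc hp
  have e : (7e-7 : ℝ) ^ p ≤ 1.9e-10 :=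
    rpow_le_of_pow_le_pow (m := 19) (n := 12) (by norm_num) (by norm_num) (by norm_num)
      (by norm_num) (by norm_num; linarith [hp.1]) (by norm_num)
  rw [eqn₂, add_zero, add_zero]
  linarith [hsp.2]

lemma eqn₂_right_pos {p : ℝ} (hp : p ∈ Iₚ) :
    0 < eqn₂ p (rootThird p) 1.05e-6 (-1e-12) := by
  have hs := two_mul_rootThird_mem_Icc hp
  have hsp := two_mul_rootThird_rpow_mem_Icc hp
  have hs₀ : 0 < 2 * rootThird p := by linarith [hs.1]
  have hlarge : ∀ v ∈ Icc (1.049999e-6 : ℝ) 1, 2.8e-10 ≤ v ^ p := fun v hv =>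
    (le_rpow_of_pow_le_pow (m := 27) (n := 17) (by norm_num) (by norm_num) (by norm_num)
      (by norm_num; linarith [hp.2]) (by norm_num)).trans
      (rpow_le_rpow (by norm_num) hv.1 (by linarith [hp.1]))
  have e₁ := hlarge (1.05e-6 + -1e-12) ⟨by norm_num, by norm_num⟩
  have e₂ := hlarge 1.05e-6 ⟨by norm_num, by norm_num⟩
  have htan := tangent_le_rpow_add hs₀ (by linarith [hs.1] : 0 ≤ 2 * rootThird p + -1e-12)
    (by linarith [hp.1] : 1 ≤ p)
  have hcoeff : p * (2 * rootThird p) ^ (p - 1) ≤ p * 1 :=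
    mul_le_mul_of_nonneg_left (rpow_le_one hs₀.le hs.2 (by linarith [hp.1]))
      (by linarith [hp.1])
  rw [eqn₂]
  linarith [hp.2, hsp.1]

lemma eqn₁_left_nonneg {p w : ℝ} (hp : p ∈ Iₚ) (hw : w ∈ Icc (-1e-9 : ℝ) 1e-9)
    (h : eqn₂ p (rootThird p) 7e-7 w = 0) :
    0 ≤ eqn₁ p (rootThird p) 7e-7 w := by
  have ht := two_mul_rootThird_mem_Icc hp
  have hmono := eqn₂_strictMonoOn (p := p) (t := rootThird p) (u := 7e-7) (c := -1e-9)
    (by linarith [hp.1]) (by norm_num) (by linarith [ht.1])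
  have hw₀ : 0 ≤ w := by
    by_contra! hw₀
    linarith [eqn₂_left_zero_neg hp, hmono hw.1 (by norm_num : (-1e-9 : ℝ) ≤ 0) hw₀]
  refine le_trans ?_ (eqn₁_ge (by linarith [hp.1]) (rootThird_pos p)
    (rootThird_rpow (by linarith [hp.1])) (by linarith [hw.1, ht.1]) (by linarith [ht.1])
    (by linarith [ht.1]))
  have := le_mul_rootThird_rpow_sub_one hp
  positivity

lemma eqn₁_right_nonpos {p w : ℝ} (hp : p ∈ Iₚ) (hw : w ∈ Icc (-1e-9 : ℝ) 1e-9)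
    (h : eqn₂ p (rootThird p) 1.05e-6 w = 0) :
    eqn₁ p (rootThird p) 1.05e-6 w ≤ 0 := by
  have ht := two_mul_rootThird_mem_Icc hp
  have hmono := eqn₂_strictMonoOn (p := p) (t := rootThird p) (u := 1.05e-6) (c := -1e-9)
    (by linarith [hp.1]) (by norm_num) (by linarith [ht.1])
  have hw₀ : w < -1e-12 := by
    by_contra! hw₀
    linarith [eqn₂_right_pos hp,
      hmono.monotoneOn (by norm_num : (-1e-9 : ℝ) ≤ -1e-12) hw.1 hw₀]
  have hK₁ := le_mul_rootThird_rpow_sub_one hp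
  have hK₂ := mul_rootThird_rpow_sub_two_le hp
  have hK₂₀ : 0 ≤ (p - 1) * rootThird p ^ (p - 2) := by
    have := rootThird_pos p
    have : 0 ≤ p - 1 := by linarith [hp.1]
    positivity
  refine (eqn₁_le (by linarith [hp.1]) (by linarith [hp.2]) (rootThird_pos p)
    (rootThird_rpow (by linarith [hp.1])) (by linarith [hw.1, ht.1]) (by linarith [ht.1])
    (by linarith [hw.1, ht.1])).trans ?_
  -- Pushed below `-10⁻¹²` by `eqn₂_right_pos`, `w` makes the linear term at most
  -- `-2.1·10⁻¹²`, which beats the quadratic remainder `≤ 0.79 · 2.21·10⁻¹²`.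
  have hQ : w ^ 2 + 1.05e-6 ^ 2 + (1.05e-6 + w) ^ 2 ≤ 2.21e-12 := by
    nlinarith [hw.1]
  nlinarith [mul_le_mul_of_nonneg_left hQ hK₂₀]

/-- For every `p ∈ [1.5849625, 1.5849625 + 10⁻¹⁰]` there is a triple `(x, y, z)` with
`max(|x − 0.499999999842|, |y − 0.499999124646|, |z − 0.500000875038|) < 2·10⁻⁷`
satisfying `z ≥ x ≥ y ≥ 0`, `x^p + y^p + z^p = 1`, `(x−y)^p + (z−x)^p + (y+z)^p = 1`, and
`3(−x+y+z)^p = 1`. -/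
theorem solution_near_log2_3 :
    ∀ p ∈ Set.Icc (1.5849625 : ℝ) (1.5849625 + 1e-10),
      ∃ x y z : ℝ,
        max |x - 0.499999999842| (max |y - 0.499999124646| |z - 0.500000875038|)
            < 2e-7 ∧
        z ≥ x ∧ x ≥ y ∧ y ≥ 0 ∧
        x ^ p + y ^ p + z ^ p = 1 ∧
        (x - y) ^ p + (z - x) ^ p + (y + z) ^ p = 1 ∧
        3 * (-x + y + z) ^ p = 1 := by
  intro p hp
  have hp₀ : 0 < p := by linarith [hp.1]
  set t := rootThird p
  obtain ⟨ht₁, ht₂⟩ : 2 * t ∈ Icc (1 - 5.3e-10 : ℝ) 1 := two_mul_rootThird_mem_Icc hp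
  obtain ⟨u, ⟨hu₁, hu₂⟩, w, ⟨hw₁, hw₂⟩, h₁, h₂⟩ :=
    exists_common_zero_of_strictMonoOn (f := eqn₁ p t) (g := eqn₂ p t)
      (by norm_num : (7e-7 : ℝ) ≤ 1.05e-6) (by norm_num : (-1e-9 : ℝ) ≤ 1e-9)
      (continuous_eqn₁ hp₀.le t).continuousOn (continuous_eqn₂ hp₀.le t).continuousOn
      (fun u hu => (eqn₂_strictMonoOn hp₀ (by linarith [hu.1]) (by linarith)).mono
        Icc_subset_Ici_self)
      (fun u hu => eqn₂_bottom_nonpos hp hu)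
      (fun u hu => eqn₂_top_nonneg hp (by linarith [hu.1]))
      (fun w hw => eqn₁_left_nonneg hp hw) (fun w hw => eqn₁_right_nonpos hp hw)
  refine ⟨t + w, t - u, t + u + w, ?_, by linarith, by linarith, by linarith, ?_, ?_, ?_⟩
  · simp only [max_lt_iff, abs_lt]
    refine ⟨⟨?_, ?_⟩, ⟨?_, ?_⟩, ⟨?_, ?_⟩⟩ <;> linarith
  · rw [eqn₁] at h₁
    linarith
  · rw [eqn₂] at h₂
    rw [show t + w - (t - u) = u + w by ring, show t + u + w - (t + w) = u by ring,
      show t - u + (t + u + w) = 2 * t + w by ring]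
    linarith
  · rw [show -(t + w) + (t - u) + (t + u + w) = t by ring, rootThird_rpow hp₀.ne']
    norm_num
end

section
/- Let 𝒦 ⊆ ℝⁿ be a compact convex set with nonempty interior, let B ∈ GL_n(ℝ), and suppose the translates {Bu + 𝒦 : u ∈ ℤⁿ} have pairwise disjoint interiors, so that 𝒫 = ⋃_{u ∈ ℤⁿ} (Bu + 𝒦) is a lattice packing. Then the upper density δ(𝒫) = limsup_{r → ∞} sup_{c ∈ ℝⁿ} vol(B(c, r) ∩ 𝒫) / vol B(c, r) equals vol(𝒦) / |det B|, where B(c, r) denotes the Euclidean ball of radius r centered at c and vol denotes Lebesgue measure. -/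
open Pointwise MeasureTheory Filter

/-!
Let `D = B [0,1)ⁿ`, a half-open parallelepiped of volume `|det B|` whose translates `Bu + D` tile
space, and let `𝒦 ⊆ B(0, R)`, `D ⊆ B(0, d)`. The frontier of a convex set is null, so the
translates `Bu + 𝒦` are a.e. disjoint. Every translate `Bu + 𝒦` meeting `B(c, r)` has its cell
`Bu + D` inside `B(c, r + R + d)`, and the cells covering `B(c, r - R - d)` belong to translates
`Bu + 𝒦` inside `B(c, r)`. Counting cells against translates gives
`vol 𝒦 · vol B(r - R - d) ≤ |det B| · vol (B(c, r) ∩ 𝒫) ≤ vol 𝒦 · vol B(r + R + d)`,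
and `vol B(r ± (R + d)) / vol B(r) → 1`, so the density ratio converges, uniformly in `c`.
-/

open Set Metric Topology Bornology Function
open scoped ENNReal

section Translates

variable {G : Type*} [AddGroup G] [MeasurableSpace G] {μ : Measure G} [μ.IsAddLeftInvariant]

theorem measure_mul_le_of_subset_biUnion_vadd [MeasurableAdd G] {ι : Type*} [Countable ι]
    (t : ι → G) (s : Set ι) {X Y A C : Set G} (hX : X ⊆ ⋃ i ∈ s, t i +ᵥ A)
    (hY : ∀ i ∈ s, t i +ᵥ C ⊆ Y)
    (hC : MeasurableSet C) (hCdisj : Pairwise (AEDisjoint μ on fun i => t i +ᵥ C)) :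
    μ X * μ C ≤ μ A * μ Y := by
  have hXA : μ X ≤ ∑' _ : s, μ A := calc
    μ X ≤ ∑' i : s, μ (t (i : ι) +ᵥ A) :=
      (measure_mono hX).trans (measure_biUnion_le μ s.to_countable _)
    _ = ∑' _ : s, μ A := by simp only [measure_vadd]
  have hCY : ∑' _ : s, μ C ≤ μ Y := calc
    ∑' _ : s, μ C = μ (⋃ i ∈ s, t i +ᵥ C) := by
      rw [measure_biUnion₀ s.to_countable (fun i _ j _ hij => hCdisj hij)
        (fun i _ => (hC.const_vadd _).nullMeasurableSet)]
      simp only [measure_vadd]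
    _ ≤ μ Y := measure_mono (iUnion₂_subset hY)
  calc μ X * μ C ≤ (∑' _ : s, μ A) * μ C := by gcongr
    _ = μ A * ∑' _ : s, μ C := by rw [← ENNReal.tsum_mul_right, ← ENNReal.tsum_mul_left]
    _ ≤ μ A * μ Y := by gcongr

theorem measure_ne_zero_of_iUnion_vadd_eq_univ [NeZero μ] {ι : Type*} [Countable ι]
    {t : ι → G} {D : Set G} (hD : ⋃ i, t i +ᵥ D = univ) : μ D ≠ 0 := by
  intro h
  apply NeZero.ne μ
  rw [← Measure.measure_univ_eq_zero, ← hD]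
  exact measure_iUnion_null fun i => by rwa [measure_vadd]

theorem aedisjoint_vadd_of_vadd_interior_inter_eq_empty [TopologicalSpace G] {K : Set G}
    (hK : μ (frontier K) = 0) {a b : G} (h : (a +ᵥ interior K) ∩ (b +ᵥ interior K) = ∅) :
    AEDisjoint μ (a +ᵥ K) (b +ᵥ K) := by
  have hKsub : K ⊆ interior K ∪ frontier K :=
    subset_closure.trans (closure_eq_interior_union_frontier K).subset
  refine measure_mono_null (t := (a +ᵥ frontier K) ∪ (b +ᵥ frontier K)) ?_
    (measure_union_null (by rwa [measure_vadd]) (by rwa [measure_vadd]))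
  rintro x ⟨hxa, hxb⟩
  rw [mem_vadd_set_iff_neg_vadd_mem] at hxa hxb
  rw [mem_union, mem_vadd_set_iff_neg_vadd_mem, mem_vadd_set_iff_neg_vadd_mem]
  by_contra! hx
  have hia : -a +ᵥ x ∈ interior K := (hKsub hxa).resolve_right hx.1
  have hib : -b +ᵥ x ∈ interior K := (hKsub hxb).resolve_right hx.2
  exact (h ▸ mem_empty_iff_false x).mp
    ⟨mem_vadd_set_iff_neg_vadd_mem.2 hia, mem_vadd_set_iff_neg_vadd_mem.2 hib⟩

end Translates

theorem dist_le_of_mem_vadd {E : Type*} [SeminormedAddCommGroup E] {K : Set E} {R : ℝ}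
    (hKR : K ⊆ closedBall 0 R) {v x : E} (hx : x ∈ v +ᵥ K) : dist x v ≤ R := by
  have : x ∈ v +ᵥ closedBall (0 : E) R := vadd_set_mono hKR hx
  rwa [vadd_closedBall_zero, mem_closedBall] at this

section Bounds

variable {E : Type*} [NormedAddCommGroup E] [MeasurableSpace E] [BorelSpace E]
  (μ : Measure E) [μ.IsAddLeftInvariant] {ι : Type*} [Countable ι] (t : ι → E)
  {K D : Set E} {R d : ℝ}

theorem measure_closedBall_inter_iUnion_vadd_mul_le (hKR : K ⊆ closedBall 0 R)
    (hDd : D ⊆ closedBall 0 d) (hD : MeasurableSet D)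
    (hDdisj : Pairwise (AEDisjoint μ on fun i => t i +ᵥ D)) (c : E) (r : ℝ) :
    μ (closedBall c r ∩ ⋃ i, t i +ᵥ K) * μ D ≤ μ K * μ (closedBall c (r + R + d)) := by
  refine measure_mul_le_of_subset_biUnion_vadd t {i | dist (t i) c ≤ r + R} ?_ ?_ hD hDdisj
  · rintro x ⟨hxc, hxK⟩
    obtain ⟨i, hi⟩ := mem_iUnion.1 hxK
    refine mem_biUnion (x := i) ?_ hi
    have hxt := dist_le_of_mem_vadd hKR hi
    show dist (t i) c ≤ r + R
    linarith [dist_triangle (t i) x c, dist_comm x (t i), mem_closedBall.1 hxc]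
  · intro i (hi : dist (t i) c ≤ r + R) y hy
    have hyt := dist_le_of_mem_vadd hDd hy
    rw [mem_closedBall]
    linarith [dist_triangle y (t i) c]

theorem measure_closedBall_mul_le_measure_closedBall_inter_iUnion_vadd
    (hKR : K ⊆ closedBall 0 R) (hK : MeasurableSet K)
    (hKdisj : Pairwise (AEDisjoint μ on fun i => t i +ᵥ K))
    (hDd : D ⊆ closedBall 0 d) (hDcover : ⋃ i, t i +ᵥ D = univ) (c : E) (r : ℝ) :
    μ (closedBall c (r - R - d)) * μ K ≤ μ D * μ (closedBall c r ∩ ⋃ i, t i +ᵥ K) := by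
  refine measure_mul_le_of_subset_biUnion_vadd t {i | dist (t i) c ≤ r - R} ?_ ?_ hK hKdisj
  · intro x hxc
    obtain ⟨i, hi⟩ := mem_iUnion.1 (hDcover.symm ▸ mem_univ x : x ∈ ⋃ i, t i +ᵥ D)
    refine mem_biUnion (x := i) ?_ hi
    have hxt := dist_le_of_mem_vadd hDd hi
    show dist (t i) c ≤ r - R
    linarith [dist_triangle (t i) x c, dist_comm x (t i), mem_closedBall.1 hxc]
  · intro i (hi : dist (t i) c ≤ r - R) y hy
    have hyt := dist_le_of_mem_vadd hKR hy
    refine ⟨?_, mem_iUnion.2 ⟨i, hy⟩⟩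
    rw [mem_closedBall]
    linarith [dist_triangle y (t i) c]

end Bounds

section Density

variable {E : Type*} [NormedAddCommGroup E] [NormedSpace ℝ E] [FiniteDimensional ℝ E]
  [MeasurableSpace E] [BorelSpace E] (μ : Measure E) [μ.IsAddHaarMeasure]
  {ι : Type*} [Countable ι] (t : ι → E) {K D : Set E}

theorem tendsto_addHaar_closedBall_add_div_addHaar_closedBall (x : E) (a : ℝ) :
    Tendsto (fun r => μ (closedBall x (r + a)) / μ (closedBall x r)) atTop (𝓝 1) := by
  have hball : μ (ball (0 : E) 1) ≠ 0 := (measure_ball_pos μ 0 zero_lt_one).ne'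
  have hquot : Tendsto (fun r : ℝ => ((r + a) / r) ^ Module.finrank ℝ E) atTop (𝓝 1) := by
    have h : Tendsto (fun r : ℝ => 1 + a * r⁻¹) atTop (𝓝 1) := by
      simpa using tendsto_const_nhds.add (tendsto_inv_atTop_zero.const_mul a)
    simpa using (h.congr' ((eventually_ne_atTop 0).mono fun r hr => by field_simp)).pow _
  refine (ENNReal.ofReal_one ▸ ENNReal.tendsto_ofReal hquot).congr' ?_
  filter_upwards [eventually_gt_atTop 0, eventually_gt_atTop (-a)] with r hr hra
  rw [Measure.addHaar_closedBall μ x (by linarith), Measure.addHaar_closedBall μ x hr.le,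
    ENNReal.mul_div_mul_right _ _ hball measure_ball_lt_top.ne,
    ← ENNReal.ofReal_div_of_pos (by positivity), div_pow]

theorem tendsto_iSup_addHaar_closedBall_inter_iUnion_vadd_div (hK : IsBounded K)
    (hKm : MeasurableSet K) (hKdisj : Pairwise (AEDisjoint μ on fun i => t i +ᵥ K))
    (hD : IsBounded D) (hDm : MeasurableSet D) (hDcover : ⋃ i, t i +ᵥ D = univ)
    (hDdisj : Pairwise (AEDisjoint μ on fun i => t i +ᵥ D)) :
    Tendsto (fun r => ⨆ c, μ (closedBall c r ∩ ⋃ i, t i +ᵥ K) / μ (closedBall c r)) atTop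
      (𝓝 (μ K / μ D)) := by
  obtain ⟨R, hKR⟩ := hK.subset_closedBall 0
  obtain ⟨d, hDd⟩ := hD.subset_closedBall 0
  have hD0 : μ D ≠ 0 := measure_ne_zero_of_iUnion_vadd_eq_univ hDcover
  have hDtop : μ D ≠ ∞ := hD.measure_lt_top.ne
  have hlim (a : ℝ) : Tendsto (fun r => μ K / μ D * (μ (closedBall 0 (r + a)) /
      μ (closedBall 0 r))) atTop (𝓝 (μ K / μ D)) := by
    simpa using ENNReal.Tendsto.const_mul
      (tendsto_addHaar_closedBall_add_div_addHaar_closedBall μ 0 a) (Or.inl one_ne_zero)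
  refine tendsto_of_tendsto_of_tendsto_of_le_of_le (hlim (-(R + d))) (hlim (R + d)) (fun r => ?_)
    (fun r => iSup_le fun c => ?_)
  · have hlow := measure_closedBall_mul_le_measure_closedBall_inter_iUnion_vadd μ t hKR hKm
      hKdisj hDd hDcover 0 r
    refine le_iSup_of_le 0 (le_trans (le_of_eq ?_) (ENNReal.div_le_div_right
      (ENNReal.div_le_of_le_mul' hlow) _))
    rw [← sub_eq_add_neg, ← sub_sub]
    simp only [div_eq_mul_inv]
    ring
  · have hup := measure_closedBall_inter_iUnion_vadd_mul_le μ t hKR hDd hDm hDdisj c r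
    rw [← ENNReal.le_div_iff_mul_le (Or.inl hD0) (Or.inl hDtop)] at hup
    refine le_trans (ENNReal.div_le_div_right hup _) (le_of_eq ?_)
    rw [Measure.addHaar_closedBall_center, Measure.addHaar_closedBall_center μ c, add_assoc]
    simp only [div_eq_mul_inv]
    ring

end Density

section UnitCube

variable {ι : Type*}

theorem iUnion_intCast_vadd_pi_Ico :
    ⋃ u : ι → ℤ, (fun i => (u i : ℝ)) +ᵥ univ.pi (fun _ : ι => Ico (0 : ℝ) 1) = univ := by
  refine eq_univ_of_forall fun x => mem_iUnion.2 ⟨fun i => ⌊x i⌋, ?_⟩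
  rw [mem_vadd_set_iff_neg_vadd_mem]
  intro i _
  show -(⌊x i⌋ : ℝ) + x i ∈ Ico 0 1
  rw [neg_add_eq_sub]
  exact ⟨Int.fract_nonneg (x i), Int.fract_lt_one (x i)⟩

theorem pairwise_disjoint_intCast_vadd_pi_Ico :
    Pairwise (Disjoint on fun u : ι → ℤ =>
      (fun i => (u i : ℝ)) +ᵥ univ.pi fun _ : ι => Ico (0 : ℝ) 1) := by
  intro u v huv
  refine disjoint_left.2 fun x hu hv => huv (funext fun i => ?_)
  rw [mem_vadd_set_iff_neg_vadd_mem] at hu hv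
  have hui := hu i (mem_univ i)
  have hvi := hv i (mem_univ i)
  simp only [vadd_eq_add, Pi.add_apply, Pi.neg_apply, mem_Ico] at hui hvi
  have hu' : ⌊x i⌋ = u i := Int.floor_eq_iff.2 ⟨by linarith, by linarith⟩
  have hv' : ⌊x i⌋ = v i := Int.floor_eq_iff.2 ⟨by linarith, by linarith⟩
  rw [← hu', hv']

end UnitCube

section Parallelepiped

variable {ι : Type*} [Fintype ι] (B : Matrix ι ι ℝ)

theorem isBounded_mulVec_image_pi_Ico :
    IsBounded (B.mulVec '' univ.pi (fun _ : ι => Ico (0 : ℝ) 1)) := by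
  have := (LinearMap.toContinuousLinearMap B.mulVecLin).lipschitz.isBounded_image
    (IsBounded.pi fun _ => isBounded_Ico (0 : ℝ) 1)
  rwa [LinearMap.coe_toContinuousLinearMap', Matrix.coe_mulVecLin] at this

variable [DecidableEq ι]

theorem iUnion_mulVec_vadd_image_pi_Ico (hB : IsUnit B) :
    ⋃ u : ι → ℤ, B.mulVec (fun i => (u i : ℝ)) +ᵥ B.mulVec '' univ.pi (fun _ => Ico (0 : ℝ) 1) =
      univ := by
  simp_rw [← Matrix.coe_mulVecLin, ← image_vadd_distrib, ← image_iUnion,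
    iUnion_intCast_vadd_pi_Ico, image_univ, Matrix.coe_mulVecLin,
    Matrix.mulVec_surjective_iff_isUnit.2 hB |>.range_eq]

theorem pairwise_disjoint_mulVec_vadd_image_pi_Ico (hB : IsUnit B) :
    Pairwise (Disjoint on fun u : ι → ℤ =>
      B.mulVec (fun i => (u i : ℝ)) +ᵥ B.mulVec '' univ.pi (fun _ => Ico (0 : ℝ) 1)) := by
  intro u v huv
  simp_rw [onFun, ← Matrix.coe_mulVecLin, ← image_vadd_distrib]
  rw [Matrix.coe_mulVecLin, disjoint_image_iff (Matrix.mulVec_injective_iff_isUnit.2 hB)]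
  exact pairwise_disjoint_intCast_vadd_pi_Ico huv

theorem volume_mulVec_image_pi_Ico :
    volume (B.mulVec '' univ.pi (fun _ : ι => Ico (0 : ℝ) 1)) = ENNReal.ofReal |B.det| := by
  rw [← Matrix.coe_mulVecLin, ← Matrix.toLin'_apply', Measure.addHaar_image_linearMap,
    LinearMap.det_toLin', volume_pi_pi]
  simp

theorem measurableSet_mulVec_image_pi_Ico (hB : IsUnit B) :
    MeasurableSet (B.mulVec '' univ.pi (fun _ : ι => Ico (0 : ℝ) 1)) :=
  (MeasurableSet.univ_pi fun _ => measurableSet_Ico).image_of_continuousOn_injOn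
    (Matrix.mulVecLin B).continuous_of_finiteDimensional.continuousOn
    (Matrix.mulVec_injective_iff_isUnit.2 hB).injOn

end Parallelepiped

-- The balls of the statement are Euclidean, so the density argument is run in
-- `EuclideanSpace ℝ ι`, to which the measure-preserving `ofLp` transports all the data.
section EuclideanTransfer

open WithLp

variable {ι : Type*}

theorem EuclideanSpace.preimage_ofLp_vadd (v : ι → ℝ) (s : Set (ι → ℝ)) :
    (ofLp ⁻¹' (v +ᵥ s) : Set (EuclideanSpace ℝ ι)) = toLp 2 v +ᵥ ofLp ⁻¹' s := by
  ext x
  simp [mem_vadd_set_iff_neg_vadd_mem]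

variable [Fintype ι]

theorem EuclideanSpace.volume_preimage_ofLp (s : Set (ι → ℝ)) :
    volume (ofLp ⁻¹' s : Set (EuclideanSpace ℝ ι)) = volume s :=
  (EuclideanSpace.volume_preserving_symm_measurableEquiv_toLp ι).measure_preimage_equiv s

theorem EuclideanSpace.preimage_ofLp_setOf_sum_sq_le (c : ι → ℝ) {r : ℝ} (hr : 0 ≤ r) :
    (ofLp ⁻¹' {x | ∑ i, (x i - c i) ^ 2 ≤ r ^ 2} : Set (EuclideanSpace ℝ ι)) =
      closedBall (toLp 2 c) r := by
  ext x
  simp [EuclideanSpace.dist_eq, Real.sqrt_le_left hr, Real.dist_eq]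

theorem tendsto_iSup_volume_setOf_sum_sq_le_inter_iUnion_vadd_div {κ : Type*} [Countable κ]
    (t : κ → ι → ℝ) {K D : Set (ι → ℝ)} (hK : IsBounded K) (hKm : MeasurableSet K)
    (hKdisj : Pairwise (AEDisjoint volume on fun j => t j +ᵥ K))
    (hD : IsBounded D) (hDm : MeasurableSet D) (hDcover : ⋃ j, t j +ᵥ D = univ)
    (hDdisj : Pairwise (AEDisjoint volume on fun j => t j +ᵥ D)) :
    Tendsto (fun r : ℝ => ⨆ c : ι → ℝ,
        volume ({x | ∑ i, (x i - c i) ^ 2 ≤ r ^ 2} ∩ ⋃ j, t j +ᵥ K) /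
          volume {x : ι → ℝ | ∑ i, (x i - c i) ^ 2 ≤ r ^ 2}) atTop
      (𝓝 (volume K / volume D)) := by
  have hbdd {s : Set (ι → ℝ)} (hs : IsBounded s) :
      IsBounded (ofLp ⁻¹' s : Set (EuclideanSpace ℝ ι)) :=
    (EuclideanSpace.equiv ι ℝ).antilipschitz.isBounded_preimage hs
  have hmeas {s : Set (ι → ℝ)} (hs : MeasurableSet s) :
      MeasurableSet (ofLp ⁻¹' s : Set (EuclideanSpace ℝ ι)) :=
    hs.preimage (PiLp.continuous_ofLp 2 _).measurable
  have hdisj {s : Set (ι → ℝ)} (hs : Pairwise (AEDisjoint volume on fun j => t j +ᵥ s)) :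
      Pairwise (AEDisjoint volume on fun j =>
        toLp 2 (t j) +ᵥ (ofLp ⁻¹' s : Set (EuclideanSpace ℝ ι))) := fun j k hjk => by
    simpa only [onFun, ← EuclideanSpace.preimage_ofLp_vadd] using
      (hs hjk).preimage (PiLp.volume_preserving_ofLp ι).quasiMeasurePreserving
  have hcover : ⋃ j, toLp 2 (t j) +ᵥ (ofLp ⁻¹' D : Set (EuclideanSpace ℝ ι)) = univ := by
    simp_rw [← EuclideanSpace.preimage_ofLp_vadd, ← preimage_iUnion, hDcover, preimage_univ]
  have key := tendsto_iSup_addHaar_closedBall_inter_iUnion_vadd_div volume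
    (fun j => toLp 2 (t j)) (hbdd hK) (hmeas hKm) (hdisj hKdisj) (hbdd hD) (hmeas hDm) hcover
    (hdisj hDdisj)
  rw [EuclideanSpace.volume_preimage_ofLp, EuclideanSpace.volume_preimage_ofLp] at key
  refine key.congr' ((eventually_ge_atTop 0).mono fun r hr => ?_)
  rw [← (toLp_surjective 2).iSup_comp]
  refine iSup_congr fun c => ?_
  simp_rw [← EuclideanSpace.preimage_ofLp_setOf_sum_sq_le c hr,
    ← EuclideanSpace.preimage_ofLp_vadd, ← preimage_iUnion, ← preimage_inter,
    EuclideanSpace.volume_preimage_ofLp]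

end EuclideanTransfer

theorem lattice_packing_density_general {n : ℕ}
    (K : Set (Fin n → ℝ)) (hK : IsCompact K) (hKconv : Convex ℝ K)
    (B : Matrix (Fin n) (Fin n) ℝ) (hB : IsUnit B)
    (hpack : ∀ u v : Fin n → ℤ, u ≠ v →
      (B.mulVec (fun i => (u i : ℝ)) +ᵥ interior K) ∩
          (B.mulVec (fun i => (v i : ℝ)) +ᵥ interior K) = ∅) :
    limsup (fun r : ℝ =>
        ⨆ c : Fin n → ℝ,
          volume ({x : Fin n → ℝ | ∑ i, (x i - c i) ^ 2 ≤ r ^ 2} ∩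
              ⋃ u : Fin n → ℤ, (B.mulVec (fun i => (u i : ℝ)) +ᵥ K)) /
            volume {x : Fin n → ℝ | ∑ i, (x i - c i) ^ 2 ≤ r ^ 2})
      atTop = volume K / ENNReal.ofReal |B.det| := by
  have hKdisj : Pairwise (AEDisjoint volume on fun u : Fin n → ℤ =>
      B.mulVec (fun i => (u i : ℝ)) +ᵥ K) := fun u v huv =>
    aedisjoint_vadd_of_vadd_interior_inter_eq_empty (hKconv.addHaar_frontier volume)
      (hpack u v huv)
  rw [← volume_mulVec_image_pi_Ico]
  exact (tendsto_iSup_volume_setOf_sum_sq_le_inter_iUnion_vadd_div _ hK.isBounded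
    hK.isClosed.measurableSet hKdisj (isBounded_mulVec_image_pi_Ico B)
    (measurableSet_mulVec_image_pi_Ico B hB) (iUnion_mulVec_vadd_image_pi_Ico B hB)
    fun u v huv => (pairwise_disjoint_mulVec_vadd_image_pi_Ico B hB huv).aedisjoint).limsup_eq

/-- Let `𝒦 ⊆ ℝⁿ` be a compact convex set with nonempty interior, let `B ∈ GL_n(ℝ)`, and
suppose the translates `{Bu + 𝒦 : u ∈ ℤⁿ}` have pairwise disjoint interiors, so that
`𝒫 = ⋃_{u ∈ ℤⁿ} (Bu + 𝒦)` is a lattice packing. Then the upper density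
`δ(𝒫) = limsup_{r → ∞} sup_c vol(B(c,r) ∩ 𝒫)/vol B(c,r)` equals `vol(𝒦)/|det B|`, where
`B(c,r)` is the Euclidean ball of radius `r` around `c`. -/
theorem lattice_packing_density {n : ℕ}
    (K : Set (Fin n → ℝ)) (hK : IsCompact K) (hKconv : Convex ℝ K)
    (hKint : (interior K).Nonempty)
    (B : Matrix (Fin n) (Fin n) ℝ) (hB : IsUnit B)
    (hpack : ∀ u v : Fin n → ℤ, u ≠ v →
      (B.mulVec (fun i => (u i : ℝ)) +ᵥ interior K) ∩
          (B.mulVec (fun i => (v i : ℝ)) +ᵥ interior K) = ∅) :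
    limsup (fun r : ℝ =>
        ⨆ c : Fin n → ℝ,
          volume ({x : Fin n → ℝ | ∑ i, (x i - c i) ^ 2 ≤ r ^ 2} ∩
              ⋃ u : Fin n → ℤ, (B.mulVec (fun i => (u i : ℝ)) +ᵥ K)) /
            volume {x : Fin n → ℝ | ∑ i, (x i - c i) ^ 2 ≤ r ^ 2})
      atTop = volume K / ENNReal.ofReal |B.det| :=
  lattice_packing_density_general K hK hKconv B hB hpack
end
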